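/- arXiv:1708.01754 — 10 statements merged into one kernel-verified Lean document; each statement's English description precedes it below -/
import Mathlib

section
/- Let (X_s)_{s∈S} be a family of T₁ spaces and (x_n)_{n∈ω} a sequence in X = ∏_{s∈S} X_s. Then (x_n) converges to a point x ∈ X in the box topology if and only if (x_n) converges to x in the product topology and there exist k ∈ ω and a finite set T ⊆ S such that for all n ≥ k, x_n agrees with x on all coordinates outside T. -/
/-!
If `x` converges in the box topology but infinitely many coordinates keep being disturbed,
a diagonal choice yields times `n₀ < n₁ < ⋯` and pairwise distinct coordinates `s₀, s₁, …`
with `x nᵢ sᵢ ≠ l sᵢ`. Since points are closed, the box with `{x nᵢ sᵢ}ᶜ` at `sᵢ` and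
everything else unrestricted is an open neighbourhood of `l` that misses every `x nᵢ`,
contradicting convergence along the subsequence. Conversely, if outside a finite `T` the
terms eventually agree with `l`, a box around `l` only imposes finitely many conditions,
each of which holds eventually by convergence in the product topology.
-/

open Filter Topology Set

/-- The box topology on a product of topological spaces: generated by all boxes
`∏ s, G s` with each `G s` open. -/
def boxTopology {S : Type*} {X : S → Type*} [∀ s, TopologicalSpace (X s)] :
    TopologicalSpace (∀ s, X s) :=
  TopologicalSpace.generateFrom
    {U | ∃ G : ∀ s, Set (X s), (∀ s, IsOpen (G s)) ∧ U = Set.univ.pi G}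

/-- `σ(a)`: the set of points differing from `a` in only finitely many coordinates. -/
def smallBox {S : Type*} {X : S → Type*} (a : ∀ s, X s) : Set (∀ s, X s) :=
  {x | {s | x s ≠ a s}.Finite}

namespace BoxTopology

variable {S : Type*} {X : S → Type*} [∀ s, TopologicalSpace (X s)]

theorem isOpen_pi {G : ∀ s, Set (X s)} (hG : ∀ s, IsOpen (G s)) :
    IsOpen[boxTopology] (univ.pi G) :=
  TopologicalSpace.GenerateOpen.basic _ ⟨G, hG, rfl⟩

theorem le_pi : (boxTopology : TopologicalSpace (∀ s, X s)) ≤ Pi.topologicalSpace := by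
  classical
  rw [← continuous_id_iff_le]
  refine @continuous_pi _ _ _ boxTopology _ _ fun s => continuous_def.2 fun G hG => ?_
  change IsOpen[boxTopology] (Function.eval s ⁻¹' G)
  rw [eval_preimage]
  refine isOpen_pi fun t => ?_
  rcases eq_or_ne t s with rfl | hts
  · simpa using hG
  · simp [hts]

theorem tendsto_nhds_of_tendsto_of_eventually_eq {α : Type*} {f : Filter α}
    {x : α → ∀ s, X s} {l : ∀ s, X s} (T : Finset S) (hx : Tendsto x f (𝓝 l))
    (hT : ∀ᶠ a in f, ∀ s ∉ T, x a s = l s) :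
    Tendsto x f (@nhds _ boxTopology l) := by
  rw [boxTopology, TopologicalSpace.tendsto_nhds_generateFrom_iff]
  rintro _ ⟨G, hG, rfl⟩ hlG
  have hTG : ∀ᶠ a in f, ∀ s ∈ T, x a s ∈ G s :=
    (eventually_all_finset T).2 fun s _ =>
      tendsto_pi_nhds.1 hx s ((hG s).mem_nhds (hlG s (mem_univ s)))
  filter_upwards [hTG, hT] with a hin hout s _
  by_cases hs : s ∈ T
  · exact hin s hs
  · exact hout s hs ▸ hlG s (mem_univ s)

theorem exists_isOpen_forall_notMem [∀ s, T1Space (X s)] {ι : Type*} {σ : ι → S}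
    (hσ : σ.Injective) {y : ι → ∀ s, X s} {l : ∀ s, X s} (hy : ∀ i, y i (σ i) ≠ l (σ i)) :
    ∃ U, IsOpen[boxTopology] U ∧ l ∈ U ∧ ∀ i, y i ∉ U := by
  set G : ∀ s, Set (X s) := fun s => ((fun i => y i s) '' (σ ⁻¹' {s}))ᶜ
  have hG : ∀ s, IsOpen (G s) := fun s =>
    (((finite_singleton s).preimage hσ.injOn).image _).isClosed.isOpen_compl
  refine ⟨univ.pi G, isOpen_pi hG, ?_, fun i hi => hi (σ i) (mem_univ _) ⟨i, rfl, rfl⟩⟩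
  rintro s - ⟨i, rfl, hi⟩
  exact hy i hi

theorem exists_finset_eventually_eq_of_tendsto [∀ s, T1Space (X s)] {x : ℕ → ∀ s, X s}
    {l : ∀ s, X s} (hx : Tendsto x atTop (@nhds _ boxTopology l)) :
    ∃ k : ℕ, ∃ T : Finset S, ∀ n ≥ k, ∀ s ∉ T, x n s = l s := by
  classical
  by_contra! hbad
  obtain ⟨p, hp, hpr⟩ := exists_seq_of_forall_finset_exists (fun p : ℕ × S => x p.1 p.2 ≠ l p.2)
    (fun p q => p.1 < q.1 ∧ p.2 ≠ q.2) fun F _ => by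
      obtain ⟨n, hn, s, hs, hne⟩ := hbad (F.sup Prod.fst + 1) (F.image Prod.snd)
      refine ⟨(n, s), hne, fun q hq => ⟨?_, ?_⟩⟩
      · exact (Nat.lt_succ_of_le (F.le_sup (f := Prod.fst) hq)).trans_le hn
      · exact fun h => hs (Finset.mem_image.2 ⟨q, hq, h⟩)
  have hmono : StrictMono fun i => (p i).1 := fun i j hij => (hpr i j hij).1
  have hinj : Function.Injective fun i => (p i).2 :=
    .of_lt_imp_ne fun i j hij => (hpr i j hij).2
  obtain ⟨U, hU, hlU, hxU⟩ := exists_isOpen_forall_notMem hinj (y := fun i => x (p i).1) hp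
  obtain ⟨i, hi⟩ := ((hx.comp hmono.tendsto_atTop).eventually
    (@IsOpen.mem_nhds _ boxTopology _ _ hU hlU)).exists
  exact hxU i hi

end BoxTopology

open BoxTopology in
theorem stmt_2 {S : Type*} {X : S → Type*} [∀ s, TopologicalSpace (X s)]
    [∀ s, T1Space (X s)] (x : ℕ → ∀ s, X s) (l : ∀ s, X s) :
    Tendsto x atTop (@nhds (∀ s, X s) boxTopology l) ↔
      (Tendsto x atTop (nhds l) ∧
        ∃ k : ℕ, ∃ T : Finset S, ∀ n ≥ k, ∀ s ∉ T, x n s = l s) := by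
  constructor
  · intro hx
    exact ⟨hx.mono_right (nhds_mono le_pi), exists_finset_eventually_eq_of_tendsto hx⟩
  · rintro ⟨hx, k, T, hT⟩
    exact tendsto_nhds_of_tendsto_of_eventually_eq T hx (eventually_atTop.2 ⟨k, hT⟩)
end

section
/- Let X be a first countable topological space, (Y_s)_{s∈S} a family of T₁ spaces, and f : X → □_{s∈S} Y_s a continuous map into the box product. Then for every x ∈ X there exist an open neighborhood U of x and a finite set T ⊆ S such that f(z) agrees with f(x) on all coordinates in S∖T for every z ∈ U. In particular, f(U) ⊆ σ(f(x)). -/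
open Filter Topology Set

/-!
If no finite set of coordinates works, first countability yields a sequence `zₙ → x` and
distinct coordinates `sₙ` with `f zₙ sₙ ≠ f x sₙ`. Removing the single point `f zₙ sₙ` from the
`sₙ`-th factor (a closed set, as `Y sₙ` is T₁) gives an open box around `f x` that misses every
`f zₙ`; its preimage is a neighbourhood of `x` containing no `zₙ`, a contradiction.
-/

open Function

theorem isOpen_boxTopology_pi {S : Type*} {Y : S → Type*} [∀ s, TopologicalSpace (Y s)]
    {G : ∀ s, Set (Y s)} (hG : ∀ s, IsOpen (G s)) :
    IsOpen[boxTopology] (univ.pi G) :=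
  TopologicalSpace.GenerateOpen.basic _ ⟨G, hG, rfl⟩

theorem exists_isOpen_boxTopology_forall_notMem {S : Type*} {Y : S → Type*}
    [∀ s, TopologicalSpace (Y s)] [∀ s, T1Space (Y s)] {a : ∀ s, Y s} {y : ℕ → ∀ s, Y s}
    {s : ℕ → S} (hs : Injective s) (hy : ∀ n, y n (s n) ≠ a (s n)) :
    ∃ V, IsOpen[boxTopology] V ∧ a ∈ V ∧ ∀ n, y n ∉ V := by
  refine ⟨univ.pi fun t => (⋃ n ∈ s ⁻¹' {t}, {y n t})ᶜ, isOpen_boxTopology_pi fun t => ?_,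
    ?_, fun n hn => ?_⟩
  · exact ((finite_singleton t).preimage hs.injOn).isClosed_biUnion
      (fun _ _ => isClosed_singleton) |>.isOpen_compl
  · simp only [Set.mem_pi, mem_univ, mem_compl_iff, mem_iUnion, mem_preimage, mem_singleton_iff,
      forall_const, not_exists]
    rintro t n rfl
    exact (hy n).symm
  · exact hn (s n) (mem_univ _) (mem_biUnion (mem_singleton (s n)) (mem_singleton _))

theorem exists_seq_tendsto_injective_of_frequently {X S : Type*} [TopologicalSpace X]
    [FirstCountableTopology X] {x : X} {p : X → S → Prop}
    (h : ∀ T : Finset S, ∃ᶠ z in 𝓝 x, ∃ s ∉ T, p z s) :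
    ∃ (z : ℕ → X) (s : ℕ → S), Tendsto z atTop (𝓝 x) ∧ Injective s ∧ ∀ n, p (z n) (s n) := by
  classical
  obtain ⟨u, hu⟩ := (𝓝 x).exists_antitone_basis
  -- The auxiliary indices `kₙ` with `zₙ ∈ u kₙ` increase strictly, so `zₙ ∈ u n` and `zₙ → x`.
  obtain ⟨g, hgP, hgr⟩ := exists_seq_of_forall_finset_exists
    (fun a : ℕ × X × S => a.2.1 ∈ u a.1 ∧ p a.2.1 a.2.2)
    (fun a b => a.1 < b.1 ∧ a.2.2 ≠ b.2.2) fun F _ => by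
      obtain ⟨z, hzu, s, hsF, hp⟩ := (frequently_iff.1 (h (F.image fun a => a.2.2)))
        (hu.mem (F.sup Prod.fst + 1))
      refine ⟨(F.sup Prod.fst + 1, z, s), ⟨hzu, hp⟩, fun a ha => ⟨?_, ?_⟩⟩
      · exact Nat.lt_succ_of_le (F.le_sup (f := Prod.fst) ha)
      · rintro rfl
        exact hsF (Finset.mem_image_of_mem _ ha)
  have hk : StrictMono fun n => (g n).1 := fun m n hmn => (hgr m n hmn).1
  refine ⟨fun n => (g n).2.1, fun n => (g n).2.2, hu.tendsto fun n => ?_, fun m n hmn => ?_,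
    fun n => (hgP n).2⟩
  · exact hu.antitone (hk.id_le n) (hgP n).1
  · by_contra hne
    rcases lt_or_gt_of_ne hne with hlt | hlt
    · exact (hgr m n hlt).2 hmn
    · exact (hgr n m hlt).2 hmn.symm

theorem exists_finset_eventually_eq_of_continuous_boxTopology {X : Type*} [TopologicalSpace X]
    [FirstCountableTopology X] {S : Type*} {Y : S → Type*} [∀ s, TopologicalSpace (Y s)]
    [∀ s, T1Space (Y s)] {f : X → ∀ s, Y s} (hf : Continuous[_, boxTopology] f) (x : X) :
    ∃ T : Finset S, ∀ᶠ z in 𝓝 x, ∀ s ∉ T, f z s = f x s := by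
  by_contra! hbad
  obtain ⟨z, s, hz, hs, hne⟩ := exists_seq_tendsto_injective_of_frequently hbad
  obtain ⟨V, hVopen, hxV, hzV⟩ := exists_isOpen_boxTopology_forall_notMem hs hne
  have hV : f ⁻¹' V ∈ 𝓝 x :=
    (@Continuous.isOpen_preimage _ _ _ boxTopology f hf V hVopen).mem_nhds hxV
  obtain ⟨n, hn⟩ := (hz.eventually hV).exists
  exact hzV n hn

theorem mem_smallBox_of_forall_notMem_eq {S : Type*} {Y : S → Type*} {a y : ∀ s, Y s}
    (T : Finset S) (h : ∀ s ∉ T, y s = a s) : y ∈ smallBox a :=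
  T.finite_toSet.subset fun s hs => by_contra fun hsT => hs (h s hsT)

theorem stmt_3 {X : Type*} [TopologicalSpace X] [FirstCountableTopology X]
    {S : Type*} {Y : S → Type*} [∀ s, TopologicalSpace (Y s)] [∀ s, T1Space (Y s)]
    (f : X → ∀ s, Y s)
    (hf : @Continuous X (∀ s, Y s) _ boxTopology f) (x : X) :
    ∃ U : Set X, IsOpen U ∧ x ∈ U ∧ ∃ T : Finset S,
      (∀ z ∈ U, ∀ s ∉ T, f z s = f x s) ∧ ∀ z ∈ U, f z ∈ smallBox (f x) := by
  obtain ⟨T, hT⟩ := exists_finset_eventually_eq_of_continuous_boxTopology hf x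
  obtain ⟨U, hUT, hUopen, hxU⟩ := mem_nhds_iff.1 hT
  exact ⟨U, hUopen, hxU, T, fun z hz => hUT hz,
    fun z hz => mem_smallBox_of_forall_notMem_eq T (hUT hz)⟩
end

section
/- Let (X_s)_{s∈S} be a family of Hausdorff spaces and X ⊆ □_{s∈S} X_s a connected, path-connected subspace of the box product. Then there exists x* ∈ X such that every point of X differs from x* in only finitely many coordinates, i.e., X ⊆ σ(x*). -/
/-!
A path `γ` in the box product stays in one class of the relation "differs in finitely many
coordinates". The relation is locally constant along `γ`: if `γ tₙ → γ t` while every `γ tₙ`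
differs from `γ t` in infinitely many coordinates, pick distinct coordinates `sₙ` with
`γ tₙ sₙ ≠ γ t sₙ`; the box whose `sₙ`-th factor is `{γ tₙ sₙ}ᶜ` (and whose other factors are
everything) is an open neighbourhood of `γ t` containing no `γ tₙ`. Connectedness of `[0, 1]`
does the rest, so any base point of a path-connected set works.
-/

open Filter Topology Set

theorem exists_injective_forall_mem_of_infinite {α : Type*} {D : ℕ → Set α}
    (hD : ∀ n, (D n).Infinite) : ∃ p : ℕ → α, p.Injective ∧ ∀ n, p n ∈ D n := by
  -- Choosing each value outside the earlier ones makes `p '' Iio n` have exactly `n` elements,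
  -- so the index `n` can be read off the finite set of earlier choices.
  obtain ⟨p, hp⟩ := seq_of_forall_finite_exists (P := fun a t => a ∉ t ∧ a ∈ D t.ncard)
    fun t ht => (hD t.ncard).exists_notMem_finite ht |>.imp fun _ h => h.symm
  have hinj : p.Injective := .of_lt_imp_ne fun m n hmn h => (hp n).1 ⟨m, hmn, h⟩
  refine ⟨p, hinj, fun n => ?_⟩
  simpa [ncard_image_of_injective _ hinj] using (hp n).2

section SmallBox

variable {S : Type*} {X : S → Type*}

theorem mem_smallBox_comm {a b : ∀ s, X s} : a ∈ smallBox b ↔ b ∈ smallBox a :=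
  ⟨fun h => h.subset fun _ => Ne.symm, fun h => h.subset fun _ => Ne.symm⟩

theorem mem_smallBox_trans {a b c : ∀ s, X s} (hab : a ∈ smallBox b) (hbc : b ∈ smallBox c) :
    a ∈ smallBox c :=
  (hab.union hbc).subset fun s hac =>
    (ne_or_eq (a s) (b s)).imp id fun h hbc => hac (h.trans hbc)

end SmallBox

section BoxTopology

variable {S : Type*} {X : S → Type*} [∀ s, TopologicalSpace (X s)]

attribute [local instance] boxTopology

theorem isOpen_univ_pi_of_isOpen {G : ∀ s, Set (X s)} (hG : ∀ s, IsOpen (G s)) :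
    IsOpen (univ.pi G) :=
  TopologicalSpace.isOpen_generateFrom_of_mem ⟨G, hG, rfl⟩

variable [∀ s, T1Space (X s)]

theorem exists_isOpen_forall_notMem_of_notMem_smallBox {a : ∀ s, X s} {x : ℕ → ∀ s, X s}
    (hx : ∀ n, x n ∉ smallBox a) : ∃ U, IsOpen U ∧ a ∈ U ∧ ∀ n, x n ∉ U := by
  obtain ⟨p, hp, hpx⟩ := exists_injective_forall_mem_of_infinite hx
  refine ⟨univ.pi fun s => ((fun n => x n s) '' (p ⁻¹' {s}))ᶜ,
    isOpen_univ_pi_of_isOpen fun s => ?_, ?_, fun n hn => ?_⟩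
  · exact ((finite_singleton s).preimage hp.injOn |>.image _).isClosed.isOpen_compl
  · rintro s - ⟨n, rfl, hn⟩
    exact hpx n hn
  · exact hn (p n) trivial ⟨n, rfl, rfl⟩

theorem Filter.Tendsto.eventually_mem_smallBox {a : ∀ s, X s} {x : ℕ → ∀ s, X s}
    (hx : Tendsto x atTop (𝓝 a)) : ∀ᶠ n in atTop, x n ∈ smallBox a := by
  by_contra h
  obtain ⟨φ, hφ, hxφ⟩ := extraction_of_frequently_atTop (not_eventually.mp h)
  obtain ⟨U, hU, haU, hxU⟩ := exists_isOpen_forall_notMem_of_notMem_smallBox hxφ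
  obtain ⟨n, hn⟩ := ((hx.comp hφ.tendsto_atTop).eventually (hU.mem_nhds haU)).exists
  exact hxU n hn

theorem Continuous.eventually_mem_smallBox {T : Type*} [TopologicalSpace T]
    [FirstCountableTopology T] {f : T → ∀ s, X s} (hf : Continuous f) (t : T) :
    ∀ᶠ u in 𝓝 t, f u ∈ smallBox (f t) :=
  eventually_iff_seq_eventually.mpr fun _ hu => ((hf.tendsto t).comp hu).eventually_mem_smallBox

theorem Continuous.mem_smallBox_of_preconnectedSpace {T : Type*} [TopologicalSpace T]
    [FirstCountableTopology T] [PreconnectedSpace T] {f : T → ∀ s, X s} (hf : Continuous f)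
    (t u : T) : f u ∈ smallBox (f t) :=
  PreconnectedSpace.induction₂' (fun t u => f u ∈ smallBox (f t))
    (fun t => (hf.eventually_mem_smallBox t).mono fun _ h => ⟨h, mem_smallBox_comm.mp h⟩)
    ⟨fun _ _ _ h₁ h₂ => mem_smallBox_trans h₂ h₁⟩ t u

theorem Joined.mem_smallBox {x y : ∀ s, X s} (h : Joined x y) : y ∈ smallBox x := by
  obtain ⟨γ⟩ := h
  simpa using γ.continuous.mem_smallBox_of_preconnectedSpace 0 1

theorem IsPathConnected.exists_subset_smallBox {A : Set (∀ s, X s)} (hA : IsPathConnected A) :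
    ∃ a ∈ A, A ⊆ smallBox a :=
  let ⟨a, ha, hjoin⟩ := hA
  ⟨a, ha, fun _ hx => (hjoin hx).joined.mem_smallBox⟩

end BoxTopology

theorem stmt_4 {S : Type*} {X : S → Type*} [∀ s, TopologicalSpace (X s)]
    [∀ s, T2Space (X s)] :
    letI : TopologicalSpace (∀ s, X s) := boxTopology
    ∀ A : Set (∀ s, X s), IsConnected A → IsPathConnected A →
      ∃ a ∈ A, A ⊆ smallBox a := by
  intro A _ hA
  exact hA.exists_subset_smallBox
end

section
/- Let (X_s)_{s∈S} be a family of functionally Hausdorff spaces and X ⊆ □_{s∈S} X_s a connected subspace of the box product. Then there exists x* ∈ X such that X ⊆ σ(x*), i.e., every point of X differs from x* in only finitely many coordinates. -/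
open Filter Topology Set

/-! Fix `a ∈ A` and suppose some `x ∈ A` differs from `a` on an infinite set of coordinates,
enumerated injectively by `e : ℕ → S`. Functional Hausdorffness gives continuous
`g s : X s → ℝ` with `g s (a s) = 0` and `g s (x s) = 1` wherever `x s ≠ a s`, so
`y ↦ (g (e n) (y (e n)))ₙ` is continuous from the box product into `ℝ^ℕ` with its box topology.
There the null sequences form a clopen set; its preimage contains `a` but not `x`. -/

lemma exists_continuous_zero_one_of_functionallyHausdorff {Y : Type*} [TopologicalSpace Y]
    (hY : ∀ y y' : Y, y ≠ y' → ∃ f : Y → unitInterval, Continuous f ∧ f y ≠ f y')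
    {y y' : Y} (hne : y ≠ y') : ∃ g : Y → ℝ, Continuous g ∧ g y = 0 ∧ g y' = 1 := by
  obtain ⟨f, hf, hfne⟩ := hY y y' hne
  have hc : (f y' : ℝ) - f y ≠ 0 := sub_ne_zero.2 fun h => hfne (Subtype.ext h).symm
  exact ⟨fun t => ((f t : ℝ) - f y) / ((f y' : ℝ) - f y),
    ((continuous_subtype_val.comp hf).sub continuous_const).div_const _,
    by simp, div_self hc⟩

section

-- Takes precedence over the product topology on every function type until the closing `end`.
attribute [local instance] boxTopology

namespace boxTopology

variable {S : Type*}

lemma isOpen_univ_pi {X : S → Type*} [∀ s, TopologicalSpace (X s)]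
    {G : ∀ s, Set (X s)} (hG : ∀ s, IsOpen (G s)) : IsOpen (univ.pi G) :=
  TopologicalSpace.GenerateOpen.basic _ ⟨G, hG, rfl⟩

lemma continuous_iff {α : Type*} [TopologicalSpace α] {X : S → Type*}
    [∀ s, TopologicalSpace (X s)] {f : α → ∀ s, X s} :
    Continuous f ↔ ∀ G : ∀ s, Set (X s), (∀ s, IsOpen (G s)) → IsOpen (f ⁻¹' univ.pi G) := by
  refine continuous_generateFrom_iff.trans ⟨fun h G hG => h _ ⟨G, hG, rfl⟩, ?_⟩
  rintro h _ ⟨G, hG, rfl⟩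
  exact h G hG

lemma continuous_piMap {X Y : S → Type*} [∀ s, TopologicalSpace (X s)]
    [∀ s, TopologicalSpace (Y s)] {f : ∀ s, X s → Y s} (hf : ∀ s, Continuous (f s)) :
    Continuous (Pi.map f) :=
  continuous_iff.2 fun _ hG => isOpen_univ_pi fun s => (hG s).preimage (hf s)

lemma continuous_comp_right {ι Y : Type*} [TopologicalSpace Y] {e : ι → S}
    (he : e.Injective) : Continuous fun u : S → Y => u ∘ e := by
  refine continuous_iff.2 fun G hG => ?_
  have hpre : (fun u : S → Y => u ∘ e) ⁻¹' univ.pi G = univ.pi fun s => ⋂ i ∈ e ⁻¹' {s}, G i := by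
    ext u
    simp [forall_comm (α := S)]
  rw [hpre]
  exact isOpen_univ_pi fun s =>
    ((subsingleton_singleton (a := s)).preimage he).finite.isOpen_biInter fun i _ => hG i

/-- Radii `1 / (n + 1)` make the box around a null sequence consist of null sequences, and a
constant radius keeps a sequence that is frequently `ε`-large frequently `ε / 2`-large. -/
lemma isClopen_setOf_tendsto_zero : IsClopen {u : ℕ → ℝ | Tendsto u atTop (𝓝 0)} := by
  constructor
  · rw [← isOpen_compl_iff, isOpen_iff_forall_mem_open]
    intro u hu
    obtain ⟨ε, hε, hfreq⟩ : ∃ ε > 0, ∃ᶠ n in atTop, ε ≤ |u n| := by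
      simpa [Metric.tendsto_atTop, Real.dist_eq, Filter.frequently_atTop] using hu
    refine ⟨univ.pi fun n => Metric.ball (u n) (ε / 2), fun v hv hv0 => ?_,
      isOpen_univ_pi fun _ => Metric.isOpen_ball, fun n _ => Metric.mem_ball_self (by positivity)⟩
    obtain ⟨n, hsmall, hlarge⟩ :=
      ((Metric.tendsto_nhds.1 hv0 (ε / 2) (by positivity)).and_frequently hfreq).exists
    have hclose := hv n trivial
    rw [Metric.mem_ball, dist_comm, Real.dist_eq] at hclose
    rw [Real.dist_eq, sub_zero] at hsmall
    linarith [abs_sub_abs_le_abs_sub (u n) (v n)]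
  · rw [isOpen_iff_forall_mem_open]
    intro u hu
    refine ⟨univ.pi fun n => Metric.ball (u n) (1 / (n + 1)), fun v hv => ?_,
      isOpen_univ_pi fun _ => Metric.isOpen_ball, fun n _ => Metric.mem_ball_self (by positivity)⟩
    have hdiff : Tendsto (fun n => v n - u n) atTop (𝓝 0) :=
      squeeze_zero_norm (fun n => (Metric.mem_ball.1 (hv n trivial)).le)
        tendsto_one_div_add_atTop_nhds_zero_nat
    simpa using hdiff.add hu

end boxTopology

theorem stmt_5 {S : Type*} {X : S → Type*} [∀ s, TopologicalSpace (X s)]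
    (hFH : ∀ s, ∀ x y : X s, x ≠ y →
      ∃ f : X s → unitInterval, Continuous f ∧ f x ≠ f y) :
    letI : TopologicalSpace (∀ s, X s) := boxTopology
    ∀ A : Set (∀ s, X s), IsConnected A → ∃ a ∈ A, A ⊆ smallBox a := by
  rintro A ⟨⟨a, ha⟩, hA⟩
  refine ⟨a, ha, fun x hx => by_contra fun hD => ?_⟩
  have hsep : ∀ s, ∃ g : X s → ℝ, Continuous g ∧ g (a s) = 0 ∧ (x s ≠ a s → g (x s) = 1) := by
    intro s
    by_cases hs : x s = a s
    · exact ⟨0, continuous_const, rfl, fun h => absurd hs h⟩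
    · obtain ⟨g, hg, hga, hgx⟩ :=
        exists_continuous_zero_one_of_functionallyHausdorff (hFH s) (Ne.symm hs)
      exact ⟨g, hg, hga, fun _ => hgx⟩
  choose g hg hga hgx using hsep
  let e : ℕ ↪ {s | x s ≠ a s} := Set.Infinite.natEmbedding _ hD
  let Φ : (∀ s, X s) → ℕ → ℝ := fun y => Pi.map g y ∘ (↑) ∘ e
  have hΦ : IsClopen (Φ ⁻¹' {u | Tendsto u atTop (𝓝 0)}) :=
    boxTopology.isClopen_setOf_tendsto_zero.preimage
      ((boxTopology.continuous_comp_right (Subtype.val_injective.comp e.injective)).comp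
        (boxTopology.continuous_piMap hg))
  have haΦ : Φ a = 0 := funext fun n => hga (e n)
  have hxΦ : Φ x = 1 := funext fun n => hgx (e n) (e n).2
  have hxW := hA.subset_isClopen hΦ ⟨a, ha, show Tendsto (Φ a) _ _ from haΦ ▸ tendsto_const_nhds⟩ hx
  simp [hxΦ, Pi.one_def, tendsto_const_nhds_iff] at hxW

end
end

section
/- Let (X_n)_{n≥1} be a sequence of metrizable spaces, a ∈ ∏_{n≥1} X_n, Z = σ(a) the small box product, and Z_n = {z ∈ Z : z_k = a_k for all k > n}. Then (Z_n)_{n≥1} is a sequentially absorbing covering of Z: every convergent sequence in Z (together with its limit) is contained in some Z_k. -/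
open Filter Topology Set

/-! Let `ν s` be a time at which coordinate `s` of the sequence differs from the limit. The box
whose `s`-th side omits `z (ν s) s` (open, as the factors are T1) is a neighbourhood of the limit
that misses `z (ν s)`, so every `ν s` is smaller than the time `N` at which the sequence enters
it: every coordinate ever moved is already moved by one of `z 0, …, z (N - 1)`. In `σ(a)` these
points and the limit differ from `a` in finitely many coordinates, and beyond all of those every
term agrees with `a`. -/

section BoxTopology

variable {S : Type*} {X : S → Type*} [∀ s, TopologicalSpace (X s)]

theorem isOpen_univ_pi_boxTopology {G : ∀ s, Set (X s)} (hG : ∀ s, IsOpen (G s)) :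
    IsOpen[boxTopology] (univ.pi G) :=
  TopologicalSpace.isOpen_generateFrom_of_mem ⟨G, hG, rfl⟩

variable [∀ s, T1Space (X s)]

theorem boxTopology_eventually_eq_of_tendsto {ι : Type*} {f : Filter ι} {z : ι → ∀ s, X s}
    {l : ∀ s, X s} (h : letI : TopologicalSpace (∀ s, X s) := boxTopology; Tendsto z f (𝓝 l))
    (ν : S → ι) : ∀ᶠ i in f, ∀ s, ν s = i → z i s = l s := by
  let _ : TopologicalSpace (∀ s, X s) := boxTopology
  let G : ∀ s, Set (X s) := fun s => {x | z (ν s) s = l s ∨ x ≠ z (ν s) s}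
  have hG : ∀ s, IsOpen (G s) := fun s => by
    simp only [G, ofPred_or]
    exact isOpen_const.union isOpen_ne
  have hl : l ∈ univ.pi G := fun s _ => (eq_or_ne (z (ν s) s) (l s)).imp_right Ne.symm
  filter_upwards [h ((isOpen_univ_pi_boxTopology hG).mem_nhds hl)] with i hi s hs
  subst hs
  simpa [G] using hi s (mem_univ s)

theorem boxTopology_exists_forall_ne_of_tendsto {z : ℕ → ∀ s, X s} {l : ∀ s, X s}
    (h : letI : TopologicalSpace (∀ s, X s) := boxTopology; Tendsto z atTop (𝓝 l)) :
    ∃ N, ∀ s n, z n s ≠ l s → ∃ m < N, z m s ≠ l s := by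
  let ν : S → ℕ := fun s => Classical.epsilon fun n => z n s ≠ l s
  obtain ⟨N, hN⟩ := eventually_atTop.mp (boxTopology_eventually_eq_of_tendsto h ν)
  refine ⟨N, fun s n hn => ?_⟩
  have hν : z (ν s) s ≠ l s := Classical.epsilon_spec (p := fun n => z n s ≠ l s) ⟨n, hn⟩
  exact ⟨ν s, not_le.mp fun hνN => hν (hN (ν s) hνN s rfl), hν⟩

end BoxTopology

theorem stmt_9 {X : ℕ → Type*} [∀ n, TopologicalSpace (X n)]
    [∀ n, TopologicalSpace.MetrizableSpace (X n)] (a : ∀ n, X n) :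
    letI : TopologicalSpace (∀ k, X k) := boxTopology
    ∀ (z : ℕ → ↥(smallBox a)) (l : ↥(smallBox a)),
      Tendsto z atTop (nhds l) →
      ∃ k : ℕ, (∀ n, ∀ j > k, (z n).1 j = a j) ∧ ∀ j > k, l.1 j = a j := by
  let _ : TopologicalSpace (∀ k, X k) := boxTopology
  intro z l hz
  obtain ⟨N, hN⟩ :=
    boxTopology_exists_forall_ne_of_tendsto ((continuous_subtype_val.tendsto l).comp hz)
  have hT : ({j | l.1 j ≠ a j} ∪ ⋃ m < N, {j | (z m).1 j ≠ a j}).Finite :=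
    l.2.union ((finite_Iio N).biUnion fun m _ => (z m).2)
  obtain ⟨k, hk⟩ := hT.bddAbove
  have hl : ∀ j > k, l.1 j = a j := fun j hj => by
    by_contra hne
    exact hj.not_ge (hk (Or.inl hne))
  refine ⟨k, fun n j hj => ?_, hl⟩
  by_contra hne
  obtain ⟨m, hm, hmj⟩ := hN j n (by simpa [hl j hj] using hne)
  refine hj.not_ge (hk (Or.inr (mem_biUnion hm ?_)))
  simpa [hl j hj] using hmj
end

section
/- Let X be a collectionwise normal space, (F_n)_{n∈ω} an increasing sequence of closed subsets of X, A = ⋃_{n∈ω} F_n, and (C_i : i ∈ I) a partition of A into sets that are clopen in A. Then there exists a sequence (𝒰_n)_{n∈ω} of discrete families 𝒰_n = (U_{n,i} : i ∈ I) of functionally open subsets of X such that F_n ∩ C_i ⊆ U_{n,i} for all n ∈ ω and i ∈ I. -/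
/-!
Each `F n` lies inside `A`, and the pieces `C i` are relatively clopen in `A`, so the traces
`F n ∩ C i` form a discrete family of closed subsets of `X`. Collectionwise normality expands it
to a discrete family of open sets, and Urysohn's lemma (collectionwise normal spaces are normal)
shrinks each of these to a functionally open set still containing `F n ∩ C i`.
-/

open Filter Topology Set

/-- A family of sets is discrete if every point has a neighborhood meeting at most
one member of the family. -/
def DiscreteFamily {X : Type*} [TopologicalSpace X] {ι : Type*} (F : ι → Set X) : Prop :=
  ∀ x : X, ∃ U ∈ nhds x, {i | (U ∩ F i).Nonempty}.Subsingleton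

/-- A space is collectionwise normal if every discrete family of closed sets can be
expanded to a discrete family of open sets. -/
def CollectionwiseNormal (X : Type*) [TopologicalSpace X] : Prop :=
  ∀ ⦃ι : Type⦄ (F : ι → Set X), (∀ i, IsClosed (F i)) → DiscreteFamily F →
    ∃ U : ι → Set X, (∀ i, IsOpen (U i)) ∧ (∀ i, F i ⊆ U i) ∧ DiscreteFamily U

/-- A set is functionally open if it is `f⁻¹((0,1])` for some continuous `f : X → [0,1]`. -/
def FunctionallyOpen {X : Type*} [TopologicalSpace X] (U : Set X) : Prop :=
  ∃ f : X → ℝ, Continuous f ∧ (∀ x, f x ∈ Set.Icc (0:ℝ) 1) ∧ U = f ⁻¹' Set.Ioc (0:ℝ) 1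

/-- A set is functionally closed if it is the zero set of a continuous `f : X → [0,1]`. -/
def FunctionallyClosed {X : Type*} [TopologicalSpace X] (U : Set X) : Prop :=
  ∃ f : X → ℝ, Continuous f ∧ (∀ x, f x ∈ Set.Icc (0:ℝ) 1) ∧ U = f ⁻¹' ({0} : Set ℝ)

section

variable {X : Type*} [TopologicalSpace X]

namespace DiscreteFamily

theorem mono {ι : Type*} {U W : ι → Set X} (hU : DiscreteFamily U) (hWU : ∀ i, W i ⊆ U i) :
    DiscreteFamily W := fun x =>
  let ⟨V, hV, hsub⟩ := hU x
  ⟨V, hV, hsub.anti fun _ hi => hi.mono (inter_subset_inter_right _ (hWU _))⟩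

theorem pairwise_disjoint {ι : Type*} {U : ι → Set X} (hU : DiscreteFamily U) :
    Pairwise (Function.onFun Disjoint U) := by
  intro i j hij
  rw [Function.onFun, disjoint_left]
  intro x hxi hxj
  obtain ⟨V, hV, hsub⟩ := hU x
  exact hij (hsub ⟨x, mem_of_mem_nhds hV, hxi⟩ ⟨x, mem_of_mem_nhds hV, hxj⟩)

theorem of_disjoint_isClosed {s t : Set X} (hs : IsClosed s) (ht : IsClosed t)
    (hst : Disjoint s t) : DiscreteFamily fun b : Bool => bif b then s else t := by
  intro x
  by_cases hx : x ∈ t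
  · refine ⟨sᶜ, hs.isOpen_compl.mem_nhds (disjoint_right.1 hst hx),
      subsingleton_singleton (a := false) |>.anti ?_⟩
    rintro (_ | _) ⟨y, hys, hy⟩
    · rfl
    · exact absurd hy hys
  · refine ⟨tᶜ, ht.isOpen_compl.mem_nhds hx, subsingleton_singleton (a := true) |>.anti ?_⟩
    rintro (_ | _) ⟨y, hyt, hy⟩
    · exact absurd hy hyt
    · rfl

end DiscreteFamily

theorem CollectionwiseNormal.normalSpace (hX : CollectionwiseNormal X) : NormalSpace X where
  normal s t hs ht hst := by
    obtain ⟨U, hUo, hU, hUd⟩ :=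
      hX _ (Bool.forall_bool.2 ⟨ht, hs⟩) (.of_disjoint_isClosed hs ht hst)
    exact ⟨U true, U false, hUo true, hUo false, hU true, hU false,
      hUd.pairwise_disjoint (by decide)⟩

theorem exists_functionallyOpen_between [NormalSpace X] {s u : Set X} (hs : IsClosed s)
    (hu : IsOpen u) (hsu : s ⊆ u) : ∃ W, FunctionallyOpen W ∧ s ⊆ W ∧ W ⊆ u := by
  obtain ⟨f, hf0, hf1, hf⟩ := exists_continuous_zero_one_of_isClosed hu.isClosed_compl hs
    (disjoint_compl_left.mono_right hsu)
  refine ⟨f ⁻¹' Ioc 0 1, ⟨f, f.continuous, hf, rfl⟩, fun x hx => ?_, fun x hx => ?_⟩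
  · simp [hf1 hx]
  · by_contra hxu
    simp [hf0 hxu] at hx

theorem CollectionwiseNormal.exists_functionallyOpen_discrete (hX : CollectionwiseNormal X)
    {ι : Type} {K : ι → Set X} (hK : ∀ i, IsClosed (K i)) (hKd : DiscreteFamily K) :
    ∃ W : ι → Set X, DiscreteFamily W ∧ (∀ i, FunctionallyOpen (W i)) ∧ ∀ i, K i ⊆ W i := by
  have := hX.normalSpace
  obtain ⟨U, hUo, hKU, hU⟩ := hX K hK hKd
  choose W hW hKW hWU using fun i => exists_functionallyOpen_between (hK i) (hUo i) (hKU i)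
  exact ⟨W, hU.mono hWU, hW, hKW⟩

section RelativeTopology

variable {A K : Set X}

theorem IsClosed.inter_of_isClosed_preimage_val {S : Set X} (hK : IsClosed K) (hKA : K ⊆ A)
    (hS : IsClosed (Subtype.val ⁻¹' S : Set A)) : IsClosed (K ∩ S) := by
  obtain ⟨D, hD, hDS⟩ := isClosed_induced_iff.1 hS
  rw [Subtype.preimage_coe_eq_preimage_coe_iff] at hDS
  have hKS : K ∩ S = K ∩ D := by
    rw [← inter_eq_left.2 hKA, inter_assoc, inter_assoc, hDS]
  exact hKS ▸ hK.inter hD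

theorem discreteFamily_inter_of_isOpen_preimage_val {ι : Type*} {C : ι → Set X}
    (hK : IsClosed K) (hKA : K ⊆ A) (hAC : A ⊆ ⋃ i, C i) (hCd : Pairwise (Function.onFun Disjoint C))
    (hCo : ∀ i, IsOpen (Subtype.val ⁻¹' C i : Set A)) :
    DiscreteFamily fun i => K ∩ C i := by
  intro x
  by_cases hx : x ∈ K
  · obtain ⟨i, hxi⟩ := mem_iUnion.1 (hAC (hKA hx))
    obtain ⟨V, hV, hVC⟩ := isOpen_induced_iff.1 (hCo i)
    rw [Subtype.preimage_coe_eq_preimage_coe_iff] at hVC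
    have hxV : x ∈ V := (hVC ▸ ⟨hKA hx, hxi⟩ : x ∈ A ∩ V).2
    refine ⟨V, hV.mem_nhds hxV, subsingleton_singleton (a := i) |>.anti ?_⟩
    rintro j ⟨y, hyV, hyK, hyC⟩
    have hyCi : y ∈ C i := (hVC ▸ ⟨hKA hyK, hyV⟩ : y ∈ A ∩ C i).2
    by_contra hji
    exact disjoint_left.1 (hCd hji) hyC hyCi
  · exact ⟨Kᶜ, hK.isOpen_compl.mem_nhds hx,
      subsingleton_empty.anti fun _ ⟨_, hyK, hy, _⟩ => hyK hy⟩

end RelativeTopology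

end

theorem stmt_10_general {X : Type*} [TopologicalSpace X] (hX : CollectionwiseNormal X)
    (F : ℕ → Set X) (hFcl : ∀ n, IsClosed (F n))
    {I : Type} (C : I → Set X)
    (hCdisj : Pairwise (Function.onFun Disjoint C))
    (hCunion : (⋃ i, C i) = ⋃ n, F n)
    (hCopen : ∀ i, IsOpen ((Subtype.val ⁻¹' C i) : Set ↥(⋃ n, F n)))
    (hCclosed : ∀ i, IsClosed ((Subtype.val ⁻¹' C i) : Set ↥(⋃ n, F n))) :
    ∃ U : ℕ → I → Set X, ∀ n,
      DiscreteFamily (U n) ∧ (∀ i, FunctionallyOpen (U n i)) ∧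
      ∀ i, F n ∩ C i ⊆ U n i := by
  choose U hU using fun n => hX.exists_functionallyOpen_discrete (K := fun i => F n ∩ C i)
    (fun i => (hFcl n).inter_of_isClosed_preimage_val (subset_iUnion F n) (hCclosed i))
    (discreteFamily_inter_of_isOpen_preimage_val (hFcl n) (subset_iUnion F n)
      hCunion.symm.subset hCdisj hCopen)
  exact ⟨U, hU⟩

theorem stmt_10 {X : Type*} [TopologicalSpace X] (hX : CollectionwiseNormal X)
    (F : ℕ → Set X) (hFcl : ∀ n, IsClosed (F n)) (hFmono : Monotone F)
    {I : Type} (C : I → Set X)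
    (hCdisj : Pairwise (Function.onFun Disjoint C))
    (hCunion : (⋃ i, C i) = ⋃ n, F n)
    (hCopen : ∀ i, IsOpen ((Subtype.val ⁻¹' C i) : Set ↥(⋃ n, F n)))
    (hCclosed : ∀ i, IsClosed ((Subtype.val ⁻¹' C i) : Set ↥(⋃ n, F n))) :
    ∃ U : ℕ → I → Set X, ∀ n,
      DiscreteFamily (U n) ∧ (∀ i, FunctionallyOpen (U n i)) ∧
      ∀ i, F n ∩ C i ⊆ U n i :=
  stmt_10_general hX F hFcl C hCdisj hCunion hCopen hCclosed
end

section
/- Let X be a topological space, (Z_s)_{s∈S} a family of metric spaces, a ∈ ∏ Z_s, ⊡ = σ(a) the small box product, and (h_n) a sequence of continuous maps h_n : X → ⊡ converging pointwise (in the box topology) to g : X → ⊡. For m, n ∈ ω let X_{m,n} = {x ∈ X : |{s ∈ S : ∃ i ≥ n, (h_i(x))_s ≠ a_s}| ≤ m}. Then each X_{m,n} is functionally closed in X and X = ⋃_{m,n∈ω} X_{m,n}. -/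
open Filter Topology Set

/-!
For a finite horizon `N`, box continuity of the `h i` makes `s ↦ ∑_{n ≤ i < N} dist (h i x s) (a s)`
depend on `x` continuously for the sup distance over `s`. Hence its `(m + 1)`-st largest value
(capped at `1`) is a continuous function of `x`, whose zero set is the horizon-`N` version of
`X_{m,n}`; and `X_{m,n}` is the countable intersection of these over `N`.

For the covering, a box-convergent sequence eventually agrees with its limit off a fixed finite set
`F` of coordinates. As `g x ∈ σ(a)`, the points `h i x` with `i` large then differ from `a` only on
the finite set `F ∪ {s | g x s ≠ a s}`.
-/

section BoxTopology

variable {S : Type*} {Z : S → Type*}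

theorem isOpen_pi_boxTopology [∀ s, TopologicalSpace (Z s)] {G : ∀ s, Set (Z s)}
    (hG : ∀ s, IsOpen (G s)) : IsOpen[boxTopology] (univ.pi G) :=
  TopologicalSpace.GenerateOpen.basic _ ⟨G, hG, rfl⟩

theorem tendstoUniformly_dist_of_continuous_boxTopology {X : Type*} [TopologicalSpace X]
    [∀ s, PseudoMetricSpace (Z s)] {h : X → ∀ s, Z s} (hh : Continuous[_, boxTopology] h)
    (a : ∀ s, Z s) (x : X) :
    TendstoUniformly (fun y s => dist (h y s) (a s)) (fun s => dist (h x s) (a s)) (𝓝 x) := by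
  rw [Metric.tendstoUniformly_iff]
  intro ε hε
  have hU : IsOpen (h ⁻¹' univ.pi fun s => Metric.ball (h x s) ε) :=
    @Continuous.isOpen_preimage _ _ _ boxTopology _ hh _
      (isOpen_pi_boxTopology fun _ => Metric.isOpen_ball)
  filter_upwards [hU.mem_nhds fun s _ => Metric.mem_ball_self hε] with y hy s
  calc dist (dist (h x s) (a s)) (dist (h y s) (a s)) ≤ dist (h x s) (h y s) :=
        dist_dist_dist_le_left _ _ _
    _ < ε := by rw [dist_comm]; exact hy s (mem_univ s)

theorem exists_finite_eventually_eq_of_tendsto_boxTopology [∀ s, TopologicalSpace (Z s)]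
    [∀ s, T1Space (Z s)] {y : ℕ → ∀ s, Z s} {y₀ : ∀ s, Z s}
    (hy : Tendsto y atTop (@nhds _ boxTopology y₀)) :
    ∃ F : Set S, F.Finite ∧ ∀ᶠ n in atTop, ∀ s ∉ F, y n s = y₀ s := by
  by_contra! hfreq
  classical
  obtain ⟨p, hdiff, hfresh⟩ := exists_seq_of_forall_finset_exists
    (fun p : S × ℕ => y p.2 p.1 ≠ y₀ p.1) (fun p q => p.1 ≠ q.1 ∧ p.2 < q.2) <| by
      intro P _
      obtain ⟨n, ⟨s, hs, hne⟩, hn⟩ := ((hfreq _ (P.image Prod.fst).finite_toSet).and_eventually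
        (eventually_gt_atTop (P.sup Prod.snd))).exists
      refine ⟨(s, n), hne, fun q hq => ⟨?_, (Finset.le_sup hq).trans_lt hn⟩⟩
      rintro rfl
      exact hs (Finset.mem_image_of_mem _ hq)
  -- `p k = (s, n)` records a coordinate `s` where `y n` differs from `y₀`, with distinct `s` and
  -- increasing `n`; excluding the value `y n s` at each such `s` gives a box around `y₀`
  -- that every `y n` of the sequence misses.
  set G : ∀ s, Set (Z s) := fun s => ((fun k => y (p k).2 s) '' {k | (p k).1 = s})ᶜ
  have hG : ∀ s, IsOpen (G s) := by
    refine fun s => (Set.Subsingleton.image (fun j hj k hk => ?_) _).isClosed.isOpen_compl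
    by_contra hjk
    rcases Nat.lt_or_gt_of_ne hjk with hlt | hlt
    · exact (hfresh _ _ hlt).1 (hj.trans hk.symm)
    · exact (hfresh _ _ hlt).1 (hk.trans hj.symm)
  have hy₀ : y₀ ∈ univ.pi G := by
    rintro s - ⟨k, rfl, hk⟩
    exact hdiff k hk
  obtain ⟨N, hN⟩ := eventually_atTop.1 <|
    hy (@IsOpen.mem_nhds _ boxTopology _ _ (isOpen_pi_boxTopology hG) hy₀)
  have hmono : StrictMono fun k => (p k).2 := fun j k hjk => (hfresh j k hjk).2
  exact hN _ (hmono.id_le N) (p N).1 (mem_univ _) ⟨N, rfl, rfl⟩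

end BoxTopology

theorem tendstoUniformly_finset_sum {ι α β γ : Type*} [UniformSpace γ] [AddCommGroup γ]
    [IsUniformAddGroup γ] {l : Filter α} (I : Finset ι) {F : ι → α → β → γ} {f : ι → β → γ}
    (hF : ∀ i ∈ I, TendstoUniformly (F i) (f i) l) :
    TendstoUniformly (fun a b => ∑ i ∈ I, F i a b) (fun b => ∑ i ∈ I, f i b) l := by
  classical
  induction I using Finset.induction_on with
  | empty =>
    exact fun u hu => Eventually.of_forall fun _ _ => by simpa using refl_mem_uniformity hu
  | insert i I hi ih =>
    simp only [Finset.sum_insert hi]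
    exact (hF i (Finset.mem_insert_self i I)).add
      (ih fun j hj => hF j (Finset.mem_insert_of_mem hj))

theorem exists_finset_card_eq_succ_of_not_exists_superset {S : Type*} {p : S → Prop} {m : ℕ}
    (hp : ¬ ∃ T : Finset S, T.card ≤ m ∧ ∀ s, p s → s ∈ T) :
    ∃ T : Finset S, T.card = m + 1 ∧ ∀ s ∈ T, p s := by
  rcases Set.finite_or_infinite {s | p s} with hfin | hinf
  · have hcard : m + 1 ≤ hfin.toFinset.card := by
      by_contra! hlt
      exact hp ⟨hfin.toFinset, Nat.lt_succ_iff.1 hlt, fun s hs => hfin.mem_toFinset.2 hs⟩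
    obtain ⟨T, hT, hTcard⟩ := Finset.exists_subset_card_eq hcard
    exact ⟨T, hTcard, fun s hs => hfin.mem_toFinset.1 (hT hs)⟩
  · obtain ⟨T, hT, hTcard⟩ := hinf.exists_subset_card_eq (m + 1)
    exact ⟨T, hTcard, fun s hs => hT hs⟩

theorem exists_finset_card_le_iff_forall_Ico {S : Type*} {q : ℕ → S → Prop} {m n : ℕ} :
    (∃ T : Finset S, T.card ≤ m ∧ ∀ s, (∃ i ≥ n, q i s) → s ∈ T) ↔
      ∀ N, ∃ T : Finset S, T.card ≤ m ∧ ∀ s, (∃ i ∈ Finset.Ico n N, q i s) → s ∈ T := by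
  refine ⟨fun ⟨T, hTm, hT⟩ N =>
    ⟨T, hTm, fun s ⟨i, hi, hq⟩ => hT s ⟨i, (Finset.mem_Ico.1 hi).1, hq⟩⟩,
    fun hN => by_contra fun hne => ?_⟩
  obtain ⟨T', hT'card, hT'⟩ := exists_finset_card_eq_succ_of_not_exists_superset hne
  have hev : ∀ᶠ N in atTop, ∀ s ∈ T', ∃ i ∈ Finset.Ico n N, q i s := by
    refine (Finset.eventually_all T').2 fun s hs => ?_
    obtain ⟨i, hi, hq⟩ := hT' s hs
    filter_upwards [eventually_gt_atTop i] with N hN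
    exact ⟨i, Finset.mem_Ico.2 ⟨hi, hN⟩, hq⟩
  obtain ⟨N, hN'⟩ := hev.exists
  obtain ⟨T, hTm, hT⟩ := hN N
  have := Finset.card_le_card fun s hs => hT s (hN' s hs)
  omega

section NthLargest

variable {S : Type*}

/-- The `n`-th largest value of `v`, counted with multiplicity (`0` if `S` has fewer than `n`
elements). -/
noncomputable def nthLargest (n : ℕ) (v : S → ℝ) : ℝ :=
  ⨆ T : {T : Finset S // T.card = n}, ⨅ s : T.1, v s

variable {m : ℕ} {v w : S → ℝ}

theorem nonempty_of_card_eq_succ (T : {T : Finset S // T.card = m + 1}) : Nonempty T.1 :=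
  (Finset.card_pos.1 (by rw [T.2]; exact m.succ_pos)).coe_sort

theorem nthLargest_nonneg (hv : ∀ s, 0 ≤ v s) : 0 ≤ nthLargest (m + 1) v :=
  Real.iSup_nonneg fun _ => Real.iInf_nonneg fun s => hv s

theorem iInf_le_one_of_card_eq_succ (hv : ∀ s, v s ≤ 1) (T : {T : Finset S // T.card = m + 1}) :
    ⨅ s : T.1, v s ≤ 1 :=
  have := nonempty_of_card_eq_succ T
  (ciInf_le (Set.finite_range _).bddBelow this.some).trans (hv _)

theorem nthLargest_le_one (hv : ∀ s, v s ≤ 1) : nthLargest (m + 1) v ≤ 1 :=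
  Real.iSup_le (iInf_le_one_of_card_eq_succ hv) zero_le_one

theorem le_nthLargest (hv : ∀ s, v s ≤ 1) (T : {T : Finset S // T.card = m + 1}) :
    ⨅ s : T.1, v s ≤ nthLargest (m + 1) v :=
  le_ciSup ⟨1, Set.forall_mem_range.2 (iInf_le_one_of_card_eq_succ hv)⟩ T

theorem nthLargest_le_add {ε : ℝ} (hε : 0 ≤ ε) (hw₀ : ∀ s, 0 ≤ w s) (hw₁ : ∀ s, w s ≤ 1)
    (hvw : ∀ s, v s ≤ w s + ε) : nthLargest (m + 1) v ≤ nthLargest (m + 1) w + ε := by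
  refine Real.iSup_le (fun T => ?_) (add_nonneg (nthLargest_nonneg hw₀) hε)
  have := nonempty_of_card_eq_succ T
  have hinf : (⨅ s : T.1, v s) - ε ≤ ⨅ s : T.1, w s :=
    le_ciInf fun s => sub_le_iff_le_add.2 <|
      (ciInf_le (Set.finite_range fun s : T.1 => v s).bddBelow s).trans (hvw s)
  linarith [le_nthLargest hw₁ T]

theorem nthLargest_eq_zero_iff (hv₀ : ∀ s, 0 ≤ v s) (hv₁ : ∀ s, v s ≤ 1) :
    nthLargest (m + 1) v = 0 ↔ ∃ T : Finset S, T.card ≤ m ∧ ∀ s, v s ≠ 0 → s ∈ T := by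
  constructor
  · intro hzero
    by_contra hne
    obtain ⟨T, hTcard, hT⟩ := exists_finset_card_eq_succ_of_not_exists_superset hne
    have := nonempty_of_card_eq_succ ⟨T, hTcard⟩
    obtain ⟨s, hs⟩ := exists_eq_ciInf_of_finite (f := fun s : T => v s)
    have hpos : 0 < ⨅ s : T, v s := hs ▸ (hv₀ s).lt_of_ne (hT s s.2).symm
    linarith [le_nthLargest hv₁ ⟨T, hTcard⟩]
  · rintro ⟨T₀, hT₀, hcover⟩
    refine le_antisymm (Real.iSup_le (fun T => ?_) le_rfl) (nthLargest_nonneg hv₀)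
    obtain ⟨s, hsT, hsT₀⟩ := Finset.exists_mem_notMem_of_card_lt_card (s := T₀) (t := T.1)
      (by rw [T.2]; omega)
    calc ⨅ s : T.1, v s ≤ v s := ciInf_le (Set.finite_range fun s : T.1 => v s).bddBelow ⟨s, hsT⟩
      _ = 0 := by_contra fun h => hsT₀ (hcover s h)

end NthLargest

section FunctionallyClosed

variable {X : Type*} [TopologicalSpace X]

theorem FunctionallyClosed.iInter_nat {C : ℕ → Set X} (hC : ∀ N, FunctionallyClosed (C N)) :
    FunctionallyClosed (⋂ N, C N) := by
  choose f hf hf01 hfC using hC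
  have hbound : ∀ N x, ‖f N x / 2 / 2 ^ N‖ ≤ 1 / 2 / 2 ^ N := fun N x => by
    rw [Real.norm_of_nonneg (by have := (hf01 N x).1; positivity)]
    gcongr
    exact (hf01 N x).2
  have hsum : ∀ x, Summable fun N => f N x / 2 / 2 ^ N := fun x =>
    (summable_geometric_two' 1).of_norm_bounded (hbound · x)
  have hterm₀ : ∀ x N, 0 ≤ f N x / 2 / 2 ^ N := fun x N => by have := (hf01 N x).1; positivity
  refine ⟨fun x => ∑' N, f N x / 2 / 2 ^ N,
    continuous_tsum (fun N => by fun_prop) (summable_geometric_two' 1) hbound,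
    fun x => ⟨tsum_nonneg (hterm₀ x), ?_⟩, ?_⟩
  · calc ∑' N, f N x / 2 / 2 ^ N ≤ ∑' N : ℕ, 1 / 2 / 2 ^ N :=
          (hsum x).tsum_le_tsum (fun N => (le_abs_self _).trans (hbound N x))
            (summable_geometric_two' 1)
      _ = 1 := tsum_geometric_two' 1
  · ext x
    simp only [mem_iInter, hfC, mem_preimage, mem_singleton_iff]
    rw [← (hsum x).hasSum_iff, hasSum_zero_iff_of_nonneg (hterm₀ x), funext_iff]
    simp

/-- The set is the zero set of `x ↦ nthLargest (m + 1) (min ‖u x ·‖ 1)`, which is continuous since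
`nthLargest` is `1`-Lipschitz for the sup distance. -/
theorem functionallyClosed_setOf_exists_finset_card_le {S : Type*} {u : X → S → ℝ}
    (hu : ∀ x, TendstoUniformly u (u x) (𝓝 x)) (m : ℕ) :
    FunctionallyClosed {x | ∃ T : Finset S, T.card ≤ m ∧ ∀ s, u x s ≠ 0 → s ∈ T} := by
  set v : X → S → ℝ := fun x s => min ‖u x s‖ 1
  have hv₀ : ∀ x s, 0 ≤ v x s := fun x s => le_min (norm_nonneg _) zero_le_one
  have hv₁ : ∀ x s, v x s ≤ 1 := fun x s => min_le_right _ _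
  have hv : ∀ x, TendstoUniformly v (v x) (𝓝 x) := fun x =>
    (lipschitzWith_one_norm.min_const 1).uniformContinuous.comp_tendstoUniformly (hu x)
  have hcont : Continuous fun x => nthLargest (m + 1) (v x) := by
    refine continuous_iff_continuousAt.2 fun x => Metric.tendsto_nhds.2 fun ε hε => ?_
    filter_upwards [Metric.tendstoUniformly_iff.1 (hv x) (ε / 2) (half_pos hε)] with y hy
    have hyx := nthLargest_le_add (m := m) (v := v y) (half_pos hε).le (hv₀ x) (hv₁ x)
      fun s => by linarith [abs_lt.1 ((Real.dist_eq _ _).symm ▸ hy s)]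
    have hxy := nthLargest_le_add (m := m) (v := v x) (half_pos hε).le (hv₀ y) (hv₁ y)
      fun s => by linarith [abs_lt.1 ((Real.dist_eq _ _).symm ▸ hy s)]
    rw [Real.dist_eq, abs_lt]
    constructor <;> linarith
  refine ⟨_, hcont, fun x => ⟨nthLargest_nonneg (hv₀ x), nthLargest_le_one (hv₁ x)⟩, ?_⟩
  ext x
  have hzero : ∀ s, v x s ≠ 0 ↔ u x s ≠ 0 := fun s => by
    rw [← (hv₀ x s).lt_iff_ne', lt_min_iff, norm_pos_iff, and_iff_left zero_lt_one]
  simp only [mem_ofPred_eq, mem_preimage, mem_singleton_iff,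
    nthLargest_eq_zero_iff (hv₀ x) (hv₁ x), hzero]

end FunctionallyClosed

section TailSupport

variable {X S : Type*} {Z : S → Type*}

theorem functionallyClosed_setOf_tail_card_le [TopologicalSpace X] [∀ s, MetricSpace (Z s)]
    (a : ∀ s, Z s) {h : ℕ → X → ∀ s, Z s} (hcont : ∀ n, Continuous[_, boxTopology] (h n))
    (m n : ℕ) :
    FunctionallyClosed
      {x : X | ∃ T : Finset S, T.card ≤ m ∧ ∀ s, (∃ i ≥ n, h i x s ≠ a s) → s ∈ T} := by
  simp only [exists_finset_card_le_iff_forall_Ico (q := fun i s => h _ _ s ≠ a s), ofPred_forall]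
  refine FunctionallyClosed.iInter_nat fun N => ?_
  have hsum_ne_zero : ∀ x s,
      ∑ i ∈ Finset.Ico n N, dist (h i x s) (a s) ≠ 0 ↔ ∃ i ∈ Finset.Ico n N, h i x s ≠ a s :=
    fun x s => by
      rw [Ne, Finset.sum_eq_zero_iff_of_nonneg fun _ _ => dist_nonneg]
      simp only [dist_eq_zero, not_forall, exists_prop]
  simpa only [hsum_ne_zero] using functionallyClosed_setOf_exists_finset_card_le
    (fun x => tendstoUniformly_finset_sum (Finset.Ico n N)
      fun i _ => tendstoUniformly_dist_of_continuous_boxTopology (hcont i) a x) m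

theorem iUnion_setOf_tail_card_le_eq_univ [∀ s, TopologicalSpace (Z s)] [∀ s, T1Space (Z s)]
    (a : ∀ s, Z s) {h : ℕ → X → ∀ s, Z s} {g : X → ∀ s, Z s} (hgmem : ∀ x, g x ∈ smallBox a)
    (hlim : ∀ x, Tendsto (fun n => h n x) atTop (@nhds _ boxTopology (g x))) :
    ⋃ m : ℕ, ⋃ n : ℕ,
      {x : X | ∃ T : Finset S, T.card ≤ m ∧ ∀ s, (∃ i ≥ n, h i x s ≠ a s) → s ∈ T} = univ := by
  refine eq_univ_of_forall fun x => ?_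
  obtain ⟨F, hF, hev⟩ := exists_finite_eventually_eq_of_tendsto_boxTopology (hlim x)
  obtain ⟨N, hN⟩ := eventually_atTop.1 hev
  have hW : (F ∪ {s | g x s ≠ a s}).Finite := hF.union (hgmem x)
  simp only [mem_iUnion]
  refine ⟨hW.toFinset.card, N, hW.toFinset, le_rfl, fun s ⟨i, hi, hne⟩ => ?_⟩
  by_contra hs
  simp only [Finite.mem_toFinset, mem_union, mem_ofPred_eq, not_or, not_not] at hs
  exact hne ((hN i hi s hs.1).trans hs.2)

end TailSupport

theorem stmt_12_general {X : Type*} [TopologicalSpace X] {S : Type*} {Z : S → Type*}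
    [∀ s, MetricSpace (Z s)] (a : ∀ s, Z s)
    (h : ℕ → X → ∀ s, Z s) (g : X → ∀ s, Z s)
    (hgmem : ∀ x, g x ∈ smallBox a)
    (hcont : ∀ n, @Continuous X (∀ s, Z s) _ boxTopology (h n))
    (hlim : ∀ x, Tendsto (fun n => h n x) atTop (@nhds (∀ s, Z s) boxTopology (g x))) :
    (∀ m n : ℕ, FunctionallyClosed
      {x : X | ∃ T : Finset S, T.card ≤ m ∧ ∀ s, (∃ i ≥ n, h i x s ≠ a s) → s ∈ T}) ∧
    (⋃ m : ℕ, ⋃ n : ℕ,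
      {x : X | ∃ T : Finset S, T.card ≤ m ∧ ∀ s, (∃ i ≥ n, h i x s ≠ a s) → s ∈ T})
      = Set.univ :=
  ⟨functionallyClosed_setOf_tail_card_le a hcont, iUnion_setOf_tail_card_le_eq_univ a hgmem hlim⟩

theorem stmt_12 {X : Type*} [TopologicalSpace X] {S : Type*} {Z : S → Type*}
    [∀ s, MetricSpace (Z s)] (a : ∀ s, Z s)
    (h : ℕ → X → ∀ s, Z s) (g : X → ∀ s, Z s)
    (hmem : ∀ n x, h n x ∈ smallBox a) (hgmem : ∀ x, g x ∈ smallBox a)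
    (hcont : ∀ n, @Continuous X (∀ s, Z s) _ boxTopology (h n))
    (hlim : ∀ x, Tendsto (fun n => h n x) atTop (@nhds (∀ s, Z s) boxTopology (g x))) :
    (∀ m n : ℕ, FunctionallyClosed
      {x : X | ∃ T : Finset S, T.card ≤ m ∧ ∀ s, (∃ i ≥ n, h i x s ≠ a s) → s ∈ T}) ∧
    (⋃ m : ℕ, ⋃ n : ℕ,
      {x : X | ∃ T : Finset S, T.card ≤ m ∧ ∀ s, (∃ i ≥ n, h i x s ≠ a s) → s ∈ T})
      = Set.univ :=
  stmt_12_general a h g hgmem hcont hlim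
end

section
/- Let X be a nonempty connected paracompact space, (Z_s)_{s∈S} a family of metrizable spaces, and (g_n) a sequence of continuous maps g_n : X → □_{s∈S} Z_s converging pointwise to g : X → □_{s∈S} Z_s, where each g_n(X) ⊆ σ(a_n) for some a_n. Then there exists a ∈ ∏ Z_s with g(X) ⊆ σ(a); that is, every Baire-one map from a connected paracompact space into a box product whose approximating continuous maps have connected images takes values in a single small box product. -/
open Filter Topology Set

/-!
In the box topology a sequence converging to `y₀` eventually lies in `σ(y₀)`: otherwise
infinitely many terms `y (φ k)` disagree with `y₀` on infinite sets, so one can pick pairwise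
distinct coordinates `t k` with `y (φ k) (t k) ≠ y₀ (t k)`, and the box that removes the single
point `y (φ k) (t k)` in coordinate `t k` is a neighbourhood of `y₀` missing every `y (φ k)`.
Since the sets `σ(a)` are the classes of an equivalence relation, the hypothesis
`gₙ(X) ⊆ σ(aₙ)` then forces `g(x)` and `g(x₀)` into the same class for every `x`.
-/

section smallBox

variable {S : Type*} {Z : S → Type*} {x y z : ∀ s, Z s}

lemma mem_smallBox_comm_s15 : x ∈ smallBox y ↔ y ∈ smallBox x := by
  simp only [smallBox, mem_ofPred_eq, ne_comm]

lemma mem_smallBox_trans_s15 (hxy : x ∈ smallBox y) (hyz : y ∈ smallBox z) : x ∈ smallBox z :=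
  (hxy.union hyz).subset fun s hs =>
    (em (x s = y s)).elim (fun h => Or.inr fun hyz => hs (h.trans hyz)) Or.inl

end smallBox

lemma exists_strictMono_injective_mem_of_frequently_infinite {S : Type*} {B : ℕ → Set S}
    (hB : ∃ᶠ n in atTop, (B n).Infinite) :
    ∃ φ : ℕ → ℕ, ∃ t : ℕ → S, StrictMono φ ∧ Function.Injective t ∧ ∀ k, t k ∈ B (φ k) := by
  classical
  obtain ⟨f, hfB, hf⟩ := exists_seq_of_forall_finset_exists (fun p : ℕ × S => p.2 ∈ B p.1)
    (fun p q => p.1 < q.1 ∧ p.2 ≠ q.2) fun F _ => by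
      obtain ⟨n, hn, hBn⟩ := frequently_atTop.1 hB ((F.sup Prod.fst) + 1)
      obtain ⟨s, hsB, hsF⟩ := (hBn.sdiff (F.image Prod.snd).finite_toSet).nonempty
      refine ⟨(n, s), hsB, fun p hp => ⟨(Finset.le_sup (f := Prod.fst) hp).trans_lt hn, ?_⟩⟩
      rintro rfl
      exact hsF (Finset.mem_image_of_mem _ hp)
  exact ⟨fun k => (f k).1, fun k => (f k).2, fun m n hmn => (hf m n hmn).1,
    .of_lt_imp_ne fun m n hmn => (hf m n hmn).2, hfB⟩

lemma eventually_mem_smallBox_of_tendsto {S : Type*} {Z : S → Type*}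
    [∀ s, TopologicalSpace (Z s)] [∀ s, T1Space (Z s)] :
    letI : TopologicalSpace (∀ s, Z s) := boxTopology
    ∀ (y : ℕ → ∀ s, Z s) (y₀ : ∀ s, Z s),
      Tendsto y atTop (𝓝 y₀) → ∀ᶠ n in atTop, y n ∈ smallBox y₀ := by
  let _ : TopologicalSpace (∀ s, Z s) := boxTopology
  intro y y₀ hy
  by_contra hfreq
  obtain ⟨φ, t, hφ, ht, hne⟩ :=
    exists_strictMono_injective_mem_of_frequently_infinite (not_eventually.1 hfreq)
  set G : ∀ s, Set (Z s) := fun s => ⋂ k ∈ t ⁻¹' {s}, {y (φ k) s}ᶜ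
  have hG : IsOpen (univ.pi G) := TopologicalSpace.isOpen_generateFrom_of_mem
    ⟨G, fun s => ((finite_singleton s).preimage ht.injOn).isOpen_biInter
      fun _ _ => isOpen_compl_singleton, rfl⟩
  have hy₀ : y₀ ∈ univ.pi G := by
    simp only [G, mem_univ_pi, mem_iInter, mem_preimage, mem_singleton_iff, mem_compl_iff]
    rintro _ k rfl
    exact Ne.symm (hne k)
  obtain ⟨k, hk⟩ := ((hy.comp hφ.tendsto_atTop).eventually (hG.mem_nhds hy₀)).exists
  exact mem_iInter₂.1 (mem_univ_pi.1 hk (t k)) k rfl rfl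

theorem stmt_15_general {X : Type*} [TopologicalSpace X]
    [Nonempty X] {S : Type*} {Z : S → Type*}
    [∀ s, TopologicalSpace (Z s)] [∀ s, TopologicalSpace.MetrizableSpace (Z s)] :
    letI : TopologicalSpace (∀ s, Z s) := boxTopology
    ∀ (g : X → ∀ s, Z s) (gseq : ℕ → X → ∀ s, Z s),
      (∀ n, Continuous (gseq n)) →
      (∀ n, ∃ an : ∀ s, Z s, ∀ x, gseq n x ∈ smallBox an) →
      (∀ x, Tendsto (fun n => gseq n x) atTop (nhds (g x))) →
      ∃ a : ∀ s, Z s, ∀ x, g x ∈ smallBox a := by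
  intro g gseq _ hsmall htend
  obtain ⟨x₀⟩ := ‹Nonempty X›
  refine ⟨g x₀, fun x => ?_⟩
  obtain ⟨n, hn₀, hn⟩ := ((eventually_mem_smallBox_of_tendsto _ _ (htend x₀)).and
    (eventually_mem_smallBox_of_tendsto _ _ (htend x))).exists
  obtain ⟨a, ha⟩ := hsmall n
  have hx : g x ∈ smallBox a := mem_smallBox_trans_s15 (mem_smallBox_comm_s15.1 hn) (ha x)
  exact mem_smallBox_trans_s15 hx (mem_smallBox_trans_s15 (mem_smallBox_comm_s15.1 (ha x₀)) hn₀)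

theorem stmt_15 {X : Type*} [TopologicalSpace X] [ParacompactSpace X]
    [ConnectedSpace X] [Nonempty X] {S : Type*} {Z : S → Type*}
    [∀ s, TopologicalSpace (Z s)] [∀ s, TopologicalSpace.MetrizableSpace (Z s)] :
    letI : TopologicalSpace (∀ s, Z s) := boxTopology
    ∀ (g : X → ∀ s, Z s) (gseq : ℕ → X → ∀ s, Z s),
      (∀ n, Continuous (gseq n)) →
      (∀ n, ∃ an : ∀ s, Z s, ∀ x, gseq n x ∈ smallBox an) →
      (∀ x, Tendsto (fun n => gseq n x) atTop (nhds (g x))) →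
      ∃ a : ∀ s, Z s, ∀ x, g x ∈ smallBox a :=
  stmt_15_general
end

section
/- Let X be a Lindelöf space, (Z_s)_{s∈S} a family of T₁ spaces, a ∈ ∏ Z_s, and (g_α)_{α∈A} a countable family of continuous maps g_α : X → ⊡_{s∈S} Z_s into the small box product σ(a), where X is first countable. Then there exists a countable set S₀ ⊆ S such that (g_α(x))_s = a_s for every α ∈ A, every x ∈ X, and every s ∈ S ∖ S₀. -/
open Filter Topology Set

/-! A continuous map `f` from a first countable space into a box product of T₁ spaces is, near
each point `x`, equal to `f x` outside finitely many coordinates: otherwise one finds points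
`yₙ → x` and distinct coordinates `sₙ` with `f yₙ sₙ ≠ f x sₙ`, and the box that removes the
value `f yₙ sₙ` at each coordinate `sₙ` is a neighbourhood of `f x` containing no `f yₙ`.
For a Lindelöf domain countably many such neighbourhoods cover, so each `gα` moves only
countably many coordinates away from `a`. -/

lemma exists_injective_forall_mem_of_antitone {S : Type*} {T : ℕ → Set S} (hT : Antitone T)
    (hinf : ∀ n, (T n).Infinite) : ∃ σ : ℕ → S, Function.Injective σ ∧ ∀ n, σ n ∈ T n := by
  classical
  obtain ⟨p, hpT, hp⟩ := exists_seq_of_forall_finset_exists (fun p : ℕ × S => p.2 ∈ T p.1)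
    (fun p q => p.1 < q.1 ∧ p.2 ≠ q.2) fun u _ => by
      obtain ⟨s, hs, hsu⟩ := (hinf (u.sup Prod.fst + 1)).exists_notMem_finset (u.image Prod.snd)
      refine ⟨(u.sup Prod.fst + 1, s), hs, fun q hq => ⟨Nat.lt_succ_of_le (u.le_sup hq), ?_⟩⟩
      rintro rfl
      exact hsu (Finset.mem_image_of_mem _ hq)
  have hmono : StrictMono fun n => (p n).1 :=
    strictMono_nat_of_lt_succ fun n => (hp n (n + 1) n.lt_succ_self).1
  exact ⟨fun n => (p n).2, .of_lt_imp_ne fun m n h => (hp m n h).2,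
    fun n => hT (hmono.id_le n) (hpT n)⟩

namespace boxTopology

variable {S : Type*} {Z : S → Type*} [∀ s, TopologicalSpace (Z s)]

lemma isOpen_pi {G : ∀ s, Set (Z s)} (hG : ∀ s, IsOpen (G s)) :
    IsOpen[boxTopology] (univ.pi G) :=
  TopologicalSpace.GenerateOpen.basic _ ⟨G, hG, rfl⟩

lemma exists_isOpen_mem_forall_notMem [∀ s, T1Space (Z s)] {ι : Type*}
    {p : ι → ∀ s, Z s} {σ : ι → S} (hσ : Function.Injective σ) {z : ∀ s, Z s}
    (hpz : ∀ i, p i (σ i) ≠ z (σ i)) :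
    ∃ U, IsOpen[boxTopology] U ∧ z ∈ U ∧ ∀ i, p i ∉ U := by
  have hsub (t : S) : Subsingleton {i // σ i = t} :=
    ⟨fun i j => Subtype.ext (hσ (i.2.trans j.2.symm))⟩
  refine ⟨univ.pi fun t => (range fun i : {i // σ i = t} => p i t)ᶜ,
    isOpen_pi fun t => (finite_range _).isClosed.isOpen_compl, ?_, ?_⟩
  · rintro t - ⟨⟨i, rfl⟩, hi⟩
    exact hpz i hi
  · exact fun i hi => hi (σ i) (mem_univ _) ⟨⟨i, rfl⟩, rfl⟩

variable {X : Type*} [TopologicalSpace X] [FirstCountableTopology X] [∀ s, T1Space (Z s)]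
  {f : X → ∀ s, Z s}

lemma exists_mem_nhds_finite_setOf_ne (hf : Continuous[_, boxTopology] f) (x : X) :
    ∃ N ∈ 𝓝 x, {s | ∃ y ∈ N, f y s ≠ f x s}.Finite := by
  by_contra! hinf
  obtain ⟨b, hb⟩ := (𝓝 x).exists_antitone_basis
  obtain ⟨σ, hσ, hσT⟩ := exists_injective_forall_mem_of_antitone
    (T := fun n => {s | ∃ y ∈ b n, f y s ≠ f x s})
    (fun m n hmn s ⟨y, hy, hys⟩ => ⟨y, hb.antitone hmn hy, hys⟩) fun n => hinf _ (hb.mem n)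
  choose y hyb hy using hσT
  let _ : TopologicalSpace (∀ s, Z s) := boxTopology
  obtain ⟨U, hU, hxU, hyU⟩ := exists_isOpen_mem_forall_notMem hσ hy
  have hlim : Tendsto (fun n => f (y n)) atTop (𝓝 (f x)) := (hf.tendsto x).comp (hb.tendsto hyb)
  obtain ⟨n, hn⟩ := (hlim.eventually (hU.mem_nhds hxU)).exists
  exact hyU n hn

lemma countable_setOf_exists_ne [LindelofSpace X] (hf : Continuous[_, boxTopology] f)
    {a : ∀ s, Z s} (ha : ∀ x, f x ∈ smallBox a) : {s | ∃ x, f x s ≠ a s}.Countable := by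
  choose N hN hfin using exists_mem_nhds_finite_setOf_ne hf
  obtain ⟨t, ht, htN⟩ := LindelofSpace.elim_nhds_subcover N hN
  refine ((ht.biUnion fun x _ => ((hfin x).union (ha x)).countable)).mono ?_
  rintro s ⟨y, hys⟩
  obtain ⟨x, hxt, hyx⟩ := mem_iUnion₂.mp (htN.symm ▸ mem_univ y : y ∈ ⋃ x ∈ t, N x)
  refine mem_biUnion hxt ?_
  by_cases hxs : f x s = a s
  · exact Or.inl ⟨y, hyx, hxs ▸ hys⟩
  · exact Or.inr hxs

end boxTopology

theorem stmt_17 {X : Type*} [TopologicalSpace X] [LindelofSpace X]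
    [FirstCountableTopology X] {S : Type*} {Z : S → Type*}
    [∀ s, TopologicalSpace (Z s)] [∀ s, T1Space (Z s)] (a : ∀ s, Z s)
    {A : Type*} [Countable A] (g : A → X → ∀ s, Z s)
    (hmem : ∀ α x, g α x ∈ smallBox a)
    (hcont : ∀ α, @Continuous X (∀ s, Z s) _ boxTopology (g α)) :
    ∃ S₀ : Set S, S₀.Countable ∧ ∀ (α : A) (x : X), ∀ s ∉ S₀, g α x s = a s := by
  refine ⟨⋃ α, {s | ∃ x, g α x s ≠ a s},
    countable_iUnion fun α => boxTopology.countable_setOf_exists_ne (hcont α) (hmem α), ?_⟩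
  intro α x s hs
  by_contra hne
  exact hs (mem_iUnion.mpr ⟨α, x, hne⟩)
end

section
/- Let X be a topological space, Z a Hausdorff space, (Z₁, λ) an equiconnected subspace of Z, g : X → Z, and let (G_n)_{n≥0}, (F_n)_{n≥0} be sequences of subsets of X², (φ_n)_{n≥1} separately continuous functions X² → [0,1], and (g_n)_{n≥1} continuous maps X → Z₁, satisfying: (1) G₀ = F₀ = X², and the diagonal Δ ⊆ G_{n+1} ⊆ F_n ⊆ G_n, with G_n open and F_n closed; (2) X²∖G_n ⊆ φ_n⁻¹(0) and F_n ⊆ φ_n⁻¹(1); (3) for every x ∈ X, every sequence (x_n) with (x_n, x) ∈ F_{n-1} for all n, and every sequence (t_n) in [0,1], one has λ(g_n(x_n), g_{n+1}(x_n), t_n) → g(x). Then the map f : X² → Z defined by f(x,y) = λ(g_n(x), g_{n+1}(x), φ_n(x,y)) for (x,y) ∈ F_{n-1}∖F_n, and f(x,y) = g(x) for (x,y) ∈ ⋂_n G_n, is well-defined and separately continuous, with diagonal g. -/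
/-!
On `F₀ \ F₁` the map `f` is the single homotopy `λ(g₁, g₂, φ₁)`. For `n ≥ 1`, near a point of
`Fₙ \ Fₙ₊₁`, i.e. on the open set `Gₙ \ Fₙ₊₁`, it agrees with the nested homotopy
`λ(λ(gₙ, gₙ₊₁, φₙ), gₙ₊₂, φₙ₊₁)`: on `Fₙ` the inner parameter is `1`, off `Gₙ₊₁` the outer one
is `0`. These are separately continuous, hence so is `f` off `⋂ Fₙ`.

At a point `(x₀, y₀)` of `⋂ Fₙ`, hypothesis (3), applied to sequences witnessing a failure, gives
`λ(gₙ(x'), gₙ₊₁(x'), t) → g(y₀)` uniformly in `t` and in `x'` with `(x', y₀) ∈ Fₙ₋₁`. On the two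
lines through `(x₀, y₀)`, a point `(x', y')` of `Fₙ` has `(x', y₀) ∈ Fₙ`, and `Gₙ₊₁ ⊆ Fₙ` is a
neighbourhood of `(x₀, y₀)`; points of `⋂ Fₙ` are handled by `g(x') = g(y₀)`, which holds by
uniqueness of limits in the Hausdorff space `Z`.
-/

open Filter Topology Set

open scoped unitInterval

section SeparateContinuity

variable {X Y Z : Type*} [TopologicalSpace X] [TopologicalSpace Y] [TopologicalSpace Z]

def crossNhds (p : X × Y) : Filter (X × Y) :=
  map (fun y => (p.1, y)) (𝓝 p.2) ⊔ map (fun x => (x, p.2)) (𝓝 p.1)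

def SeparatelyContinuous (f : X × Y → Z) : Prop :=
  (∀ x, Continuous fun y => f (x, y)) ∧ ∀ y, Continuous fun x => f (x, y)

def SeparatelyContinuousAt (f : X × Y → Z) (p : X × Y) : Prop :=
  Tendsto f (crossNhds p) (𝓝 (f p))

theorem crossNhds_le_nhds (p : X × Y) : crossNhds p ≤ 𝓝 p :=
  sup_le ((Continuous.prodMk_right p.1).tendsto' _ _ rfl)
    ((Continuous.prodMk_left p.2).tendsto' _ _ rfl)

theorem eventually_crossNhds (p : X × Y) : ∀ᶠ q in crossNhds p, q.1 = p.1 ∨ q.2 = p.2 :=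
  eventually_sup.2 ⟨eventually_map.2 (.of_forall fun _ => .inl rfl),
    eventually_map.2 (.of_forall fun _ => .inr rfl)⟩

theorem separatelyContinuousAt_iff {f : X × Y → Z} {p : X × Y} :
    SeparatelyContinuousAt f p ↔
      ContinuousAt (fun y => f (p.1, y)) p.2 ∧ ContinuousAt (fun x => f (x, p.2)) p.1 := by
  simp only [SeparatelyContinuousAt, crossNhds, tendsto_sup, tendsto_map'_iff]
  rfl

theorem separatelyContinuous_iff_forall_separatelyContinuousAt {f : X × Y → Z} :
    SeparatelyContinuous f ↔ ∀ p, SeparatelyContinuousAt f p := by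
  simp only [separatelyContinuousAt_iff, SeparatelyContinuous, continuous_iff_continuousAt]
  exact ⟨fun h p => ⟨h.1 p.1 p.2, h.2 p.2 p.1⟩,
    fun h => ⟨fun x y => (h (x, y)).1, fun y x => (h (x, y)).2⟩⟩

theorem ContinuousAt.separatelyContinuousAt {f : X × Y → Z} {p : X × Y}
    (hf : ContinuousAt f p) : SeparatelyContinuousAt f p :=
  hf.mono_left (crossNhds_le_nhds p)

theorem SeparatelyContinuousAt.congr_of_eventuallyEq {f h : X × Y → Z} {p : X × Y}
    (hh : SeparatelyContinuousAt h p) (hfh : f =ᶠ[𝓝 p] h) : SeparatelyContinuousAt f p := by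
  unfold SeparatelyContinuousAt
  rw [hfh.eq_of_nhds]
  exact hh.congr' (hfh.filter_mono (crossNhds_le_nhds p)).symm

end SeparateContinuity

theorem tendsto_lam {α Z : Type*} [TopologicalSpace Z] {Z₁ : Set Z} {lam : Z → Z → I → Z}
    (hlamc : Continuous fun p : ↥Z₁ × ↥Z₁ × I => lam p.1 p.2.1 p.2.2)
    {l : Filter α} {a b : α → Z} {τ : α → I} {a₀ b₀ : Z} {τ₀ : I}
    (ha : ∀ u, a u ∈ Z₁) (hb : ∀ u, b u ∈ Z₁) (ha₀ : a₀ ∈ Z₁) (hb₀ : b₀ ∈ Z₁)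
    (hat : Tendsto a l (𝓝 a₀)) (hbt : Tendsto b l (𝓝 b₀)) (hτ : Tendsto τ l (𝓝 τ₀)) :
    Tendsto (fun u => lam (a u) (b u) (τ u)) l (𝓝 (lam a₀ b₀ τ₀)) := by
  have hlift : Tendsto (fun u => ((⟨a u, ha u⟩ : Z₁), (⟨b u, hb u⟩ : Z₁), τ u)) l
      (𝓝 (⟨a₀, ha₀⟩, ⟨b₀, hb₀⟩, τ₀)) :=
    (tendsto_subtype_rng.2 hat).prodMk_nhds ((tendsto_subtype_rng.2 hbt).prodMk_nhds hτ)
  exact (hlamc.tendsto _).comp hlift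

theorem exists_mem_not_mem_succ {α : Type*} {s : ℕ → Set α} (h0 : s 0 = univ) {a : α}
    (h : ¬ ∀ n, a ∈ s n) : ∃ n, a ∈ s n ∧ a ∉ s (n + 1) := by
  by_contra! hstep
  exact h (Nat.rec (h0 ▸ mem_univ a) hstep)

section Gluing

variable {X Z : Type*} {Z₁ : Set Z}
  {lam : Z → Z → I → Z} {g : X → Z} {G F : ℕ → Set (X × X)} {φ : ℕ → X × X → I}
  {gs : ℕ → X → Z}

noncomputable def gluedMap (lam : Z → Z → I → Z) (g : X → Z) (F : ℕ → Set (X × X))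
    (φ : ℕ → X × X → I) (gs : ℕ → X → Z) (p : X × X) : Z :=
  open Classical in
  if h : ∃ n, p ∉ F n then
    lam (gs (Nat.find h) p.1) (gs (Nat.find h + 1) p.1) (φ (Nat.find h) p)
  else g p.1

theorem gluedMap_of_forall_mem {p : X × X} (hp : ∀ n, p ∈ F n) :
    gluedMap lam g F φ gs p = g p.1 := by
  simp [gluedMap, hp]

theorem gluedMap_of_mem_of_not_mem_succ (hF : Antitone F) {n : ℕ} {p : X × X}
    (hp : p ∈ F n) (hp' : p ∉ F (n + 1)) :
    gluedMap lam g F φ gs p = lam (gs (n + 1) p.1) (gs (n + 2) p.1) (φ (n + 1) p) := by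
  classical
  have hex : ∃ n, p ∉ F n := ⟨n + 1, hp'⟩
  have hfind : Nat.find hex = n + 1 :=
    (Nat.find_eq_iff hex).2 ⟨hp', fun m hm => not_not.2 (hF (by omega) hp)⟩
  simp only [gluedMap, dif_pos hex, hfind]

theorem gluedMap_eq_nested (hF : Antitone F) (hGF : ∀ n, G (n + 1) ⊆ F n)
    (hmem : ∀ z ∈ Z₁, ∀ w ∈ Z₁, ∀ t, lam z w t ∈ Z₁)
    (hl0 : ∀ z ∈ Z₁, ∀ w ∈ Z₁, lam z w 0 = z) (hl1 : ∀ z ∈ Z₁, ∀ w ∈ Z₁, lam z w 1 = w)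
    (hφ0 : ∀ n ≥ 1, ∀ p ∉ G n, φ n p = 0) (hφ1 : ∀ n ≥ 1, ∀ p ∈ F n, φ n p = 1)
    (hgsmem : ∀ n ≥ 1, ∀ x, gs n x ∈ Z₁) {m : ℕ} {q : X × X}
    (hqG : q ∈ G (m + 1)) (hqF : q ∉ F (m + 2)) :
    gluedMap lam g F φ gs q =
      lam (lam (gs (m + 1) q.1) (gs (m + 2) q.1) (φ (m + 1) q)) (gs (m + 3) q.1)
        (φ (m + 2) q) := by
  have hgs : ∀ k, gs (k + 1) q.1 ∈ Z₁ := fun k => hgsmem (k + 1) (by omega) q.1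
  by_cases hq : q ∈ F (m + 1)
  · rw [gluedMap_of_mem_of_not_mem_succ hF hq hqF, hφ1 (m + 1) (by omega) q hq,
      hl1 _ (hgs m) _ (hgs (m + 1))]
  · have hqG' : q ∉ G (m + 2) := fun h => hq (hGF (m + 1) h)
    rw [gluedMap_of_mem_of_not_mem_succ hF (hGF m hqG) hq, hφ0 (m + 2) (by omega) q hqG',
      hl0 _ (hmem _ (hgs m) _ (hgs (m + 1)) _) _ (hgs (m + 2))]

theorem eq_of_forall_mem_of_tendsto [TopologicalSpace Z] [T2Space Z]
    (hlim : ∀ (x : X) (xs : ℕ → X), (∀ n ≥ 1, (xs n, x) ∈ F (n - 1)) →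
      ∀ t : ℕ → I, Tendsto (fun n => lam (gs n (xs n)) (gs (n + 1) (xs n)) (t n)) atTop
        (𝓝 (g x)))
    (hdiagF : ∀ n x, (x, x) ∈ F n) {x y : X} (h : ∀ n, (x, y) ∈ F n) : g x = g y :=
  tendsto_nhds_unique (hlim x (fun _ => x) (fun _ _ => hdiagF _ x) (fun _ => 0))
    (hlim y (fun _ => x) (fun _ _ => h _) (fun _ => 0))

theorem eventually_forall_lam_mem [TopologicalSpace Z]
    (hlim : ∀ (x : X) (xs : ℕ → X), (∀ n ≥ 1, (xs n, x) ∈ F (n - 1)) →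
      ∀ t : ℕ → I, Tendsto (fun n => lam (gs n (xs n)) (gs (n + 1) (xs n)) (t n)) atTop
        (𝓝 (g x)))
    (hdiagF : ∀ n x, (x, x) ∈ F n) (c : X) {V : Set Z} (hV : V ∈ 𝓝 (g c)) :
    ∀ᶠ n in atTop, ∀ x, (x, c) ∈ F (n - 1) → ∀ t, lam (gs n x) (gs (n + 1) x) t ∈ V := by
  by_contra hbad
  simp only [not_eventually, not_forall, exists_prop] at hbad
  have hwit : ∀ n, ∃ x t, (x, c) ∈ F (n - 1) ∧
      ((∃ x, (x, c) ∈ F (n - 1) ∧ ∃ t, lam (gs n x) (gs (n + 1) x) t ∉ V) →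
        lam (gs n x) (gs (n + 1) x) t ∉ V) := fun n => by
    by_cases h : ∃ x, (x, c) ∈ F (n - 1) ∧ ∃ t, lam (gs n x) (gs (n + 1) x) t ∉ V
    · obtain ⟨x, hx, t, ht⟩ := h
      exact ⟨x, t, hx, fun _ => ht⟩
    · exact ⟨c, 0, hdiagF _ c, fun h' => absurd h' h⟩
  choose xs t hxs hxsV using hwit
  obtain ⟨n, hn, hnV⟩ :=
    (hbad.and_eventually ((hlim c xs (fun n _ => hxs n) t).eventually_mem hV)).exists
  exact hxsV n hn hnV

theorem separatelyContinuousAt_gluedMap_of_not_forall_mem [TopologicalSpace X]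
    [TopologicalSpace Z]
    (hlamc : Continuous fun p : ↥Z₁ × ↥Z₁ × I => lam p.1 p.2.1 p.2.2)
    (hmem : ∀ z ∈ Z₁, ∀ w ∈ Z₁, ∀ t, lam z w t ∈ Z₁)
    (hl0 : ∀ z ∈ Z₁, ∀ w ∈ Z₁, lam z w 0 = z) (hl1 : ∀ z ∈ Z₁, ∀ w ∈ Z₁, lam z w 1 = w)
    (hF0 : F 0 = univ) (hF : Antitone F) (hGopen : ∀ n, IsOpen (G n))
    (hFclosed : ∀ n, IsClosed (F n)) (hGF : ∀ n, G (n + 1) ⊆ F n) (hFG : ∀ n, F n ⊆ G n)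
    (hφ0 : ∀ n ≥ 1, ∀ p ∉ G n, φ n p = 0) (hφ1 : ∀ n ≥ 1, ∀ p ∈ F n, φ n p = 1)
    (hφsep : ∀ n ≥ 1, SeparatelyContinuous (φ n))
    (hgsmem : ∀ n ≥ 1, ∀ x, gs n x ∈ Z₁) (hgscont : ∀ n ≥ 1, Continuous (gs n))
    {p₀ : X × X} (hp₀ : ¬ ∀ n, p₀ ∈ F n) :
    SeparatelyContinuousAt (gluedMap lam g F φ gs) p₀ := by
  have hgs : ∀ n ≥ 1, SeparatelyContinuousAt (fun q : X × X => gs n q.1) p₀ := fun n hn =>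
    ((hgscont n hn).comp continuous_fst).continuousAt.separatelyContinuousAt
  have hφ : ∀ n ≥ 1, SeparatelyContinuousAt (φ n) p₀ := fun n hn =>
    separatelyContinuous_iff_forall_separatelyContinuousAt.1 (hφsep n hn) p₀
  have hstep : ∀ n ≥ 1,
      SeparatelyContinuousAt (fun q => lam (gs n q.1) (gs (n + 1) q.1) (φ n q)) p₀ :=
    fun n hn => tendsto_lam hlamc (fun q => hgsmem n hn q.1)
      (fun q => hgsmem (n + 1) (by omega) q.1) (hgsmem n hn p₀.1)
      (hgsmem (n + 1) (by omega) p₀.1) (hgs n hn) (hgs (n + 1) (by omega)) (hφ n hn)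
  obtain ⟨n, hn, hn'⟩ := exists_mem_not_mem_succ hF0 hp₀
  cases n with
  | zero =>
    refine (hstep 1 le_rfl).congr_of_eventuallyEq ?_
    filter_upwards [(hFclosed 1).isOpen_compl.mem_nhds hn'] with q hq
    exact gluedMap_of_mem_of_not_mem_succ hF (hF0 ▸ mem_univ q) hq
  | succ m =>
    have hinner : ∀ q : X × X, lam (gs (m + 1) q.1) (gs (m + 2) q.1) (φ (m + 1) q) ∈ Z₁ :=
      fun q => hmem _ (hgsmem _ (by omega) _) _ (hgsmem _ (by omega) _) _
    have hnested := tendsto_lam hlamc hinner (fun q => hgsmem (m + 3) (by omega) q.1)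
      (hinner p₀) (hgsmem (m + 3) (by omega) p₀.1) (hstep (m + 1) (by omega))
      (hgs (m + 3) (by omega)) (hφ (m + 2) (by omega))
    refine SeparatelyContinuousAt.congr_of_eventuallyEq hnested ?_
    filter_upwards [((hGopen (m + 1)).inter (hFclosed (m + 2)).isOpen_compl).mem_nhds
      ⟨hFG _ hn, hn'⟩] with q hq
    exact gluedMap_eq_nested hF hGF hmem hl0 hl1 hφ0 hφ1 hgsmem hq.1 hq.2

theorem separatelyContinuousAt_gluedMap_of_forall_mem [TopologicalSpace X]
    [TopologicalSpace Z] [T2Space Z]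
    (hlim : ∀ (x : X) (xs : ℕ → X), (∀ n ≥ 1, (xs n, x) ∈ F (n - 1)) →
      ∀ t : ℕ → I, Tendsto (fun n => lam (gs n (xs n)) (gs (n + 1) (xs n)) (t n)) atTop
        (𝓝 (g x)))
    (hdiagF : ∀ n x, (x, x) ∈ F n) (hF0 : F 0 = univ) (hF : Antitone F)
    (hGopen : ∀ n, IsOpen (G n)) (hGF : ∀ n, G (n + 1) ⊆ F n) (hFG : ∀ n, F n ⊆ G n)
    {p₀ : X × X} (hp₀ : ∀ n, p₀ ∈ F n) :
    SeparatelyContinuousAt (gluedMap lam g F φ gs) p₀ := by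
  unfold SeparatelyContinuousAt
  rw [gluedMap_of_forall_mem hp₀, eq_of_forall_mem_of_tendsto hlim hdiagF hp₀, tendsto_def]
  intro V hV
  obtain ⟨N, hN⟩ := eventually_atTop.1 (eventually_forall_lam_mem hlim hdiagF p₀.2 hV)
  have hFN : F N ∈ 𝓝 p₀ := mem_of_superset ((hGopen _).mem_nhds (hFG _ (hp₀ (N + 1)))) (hGF N)
  filter_upwards [crossNhds_le_nhds p₀ hFN, eventually_crossNhds p₀] with q hqN hq
  have hcross : ∀ n, q ∈ F n → (q.1, p₀.2) ∈ F n := by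
    rcases hq with h | h
    · exact fun n _ => h ▸ hp₀ n
    · exact fun n hn => h ▸ hn
  by_cases hqF : ∀ n, q ∈ F n
  · rw [mem_preimage, gluedMap_of_forall_mem hqF,
      eq_of_forall_mem_of_tendsto hlim hdiagF fun n => hcross n (hqF n)]
    exact mem_of_mem_nhds hV
  · obtain ⟨n, hn, hn'⟩ := exists_mem_not_mem_succ hF0 hqF
    have hNn : N ≤ n + 1 := by
      by_contra! h
      exact hn' (hF (by omega) hqN)
    rw [mem_preimage, gluedMap_of_mem_of_not_mem_succ hF hn hn']
    exact hN (n + 1) hNn q.1 (hcross n hn) _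

end Gluing

theorem stmt_18_general {X : Type*} [TopologicalSpace X] {Z : Type*} [TopologicalSpace Z]
    [T2Space Z] (Z₁ : Set Z) (lam : Z → Z → unitInterval → Z)
    (hmem : ∀ z ∈ Z₁, ∀ w ∈ Z₁, ∀ t, lam z w t ∈ Z₁)
    (hlamc : Continuous fun p : ↥Z₁ × ↥Z₁ × unitInterval => lam p.1 p.2.1 p.2.2)
    (hl0 : ∀ z ∈ Z₁, ∀ w ∈ Z₁, lam z w 0 = z)
    (hl1 : ∀ z ∈ Z₁, ∀ w ∈ Z₁, lam z w 1 = w)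
    (g : X → Z) (G F : ℕ → Set (X × X)) (φ : ℕ → X × X → unitInterval)
    (gs : ℕ → X → Z)
    (hF0 : F 0 = Set.univ)
    (hGopen : ∀ n, IsOpen (G n)) (hFclosed : ∀ n, IsClosed (F n))
    (hdiag : ∀ n, Set.diagonal X ⊆ G (n + 1))
    (hGF : ∀ n, G (n + 1) ⊆ F n) (hFG : ∀ n, F n ⊆ G n)
    (hφ0 : ∀ n ≥ 1, ∀ p ∉ G n, φ n p = 0)
    (hφ1 : ∀ n ≥ 1, ∀ p ∈ F n, φ n p = 1)
    (hφsep : ∀ n ≥ 1, (∀ x, Continuous fun y => φ n (x, y)) ∧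
      ∀ y, Continuous fun x => φ n (x, y))
    (hgsmem : ∀ n ≥ 1, ∀ x, gs n x ∈ Z₁)
    (hgscont : ∀ n ≥ 1, Continuous (gs n))
    (hlim : ∀ (x : X) (xs : ℕ → X), (∀ n ≥ 1, (xs n, x) ∈ F (n - 1)) →
      ∀ t : ℕ → unitInterval,
        Tendsto (fun n => lam (gs n (xs n)) (gs (n + 1) (xs n)) (t n)) atTop
          (nhds (g x))) :
    ∃ f : X × X → Z,
      (∀ n ≥ 1, ∀ p ∈ F (n - 1) \ F n,
        f p = lam (gs n p.1) (gs (n + 1) p.1) (φ n p)) ∧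
      (∀ p ∈ ⋂ n, G n, f p = g p.1) ∧
      (∀ x, Continuous fun y => f (x, y)) ∧
      (∀ y, Continuous fun x => f (x, y)) ∧
      (∀ x, f (x, x) = g x) := by
  have hF : Antitone F := antitone_nat_of_succ_le fun n => (hFG (n + 1)).trans (hGF n)
  have hdiagF : ∀ n x, (x, x) ∈ F n := fun n x => hGF n (hdiag n rfl)
  have hsep : ∀ p, SeparatelyContinuousAt (gluedMap lam g F φ gs) p := fun p => by
    by_cases hp : ∀ n, p ∈ F n
    · exact separatelyContinuousAt_gluedMap_of_forall_mem hlim hdiagF hF0 hF hGopen hGF hFG hp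
    · exact separatelyContinuousAt_gluedMap_of_not_forall_mem hlamc hmem hl0 hl1 hF0 hF hGopen
        hFclosed hGF hFG hφ0 hφ1 hφsep hgsmem hgscont hp
  obtain ⟨hcontx, hconty⟩ := separatelyContinuous_iff_forall_separatelyContinuousAt.2 hsep
  refine ⟨gluedMap lam g F φ gs, fun n hn p hp => ?_,
    fun p hp => gluedMap_of_forall_mem fun n => hGF n (mem_iInter.1 hp (n + 1)),
    hcontx, hconty, fun x => gluedMap_of_forall_mem fun n => hdiagF n x⟩
  obtain ⟨k, rfl⟩ := Nat.exists_eq_add_of_le' hn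
  exact gluedMap_of_mem_of_not_mem_succ hF hp.1 hp.2

theorem stmt_18 {X : Type*} [TopologicalSpace X] {Z : Type*} [TopologicalSpace Z]
    [T2Space Z] (Z₁ : Set Z) (lam : Z → Z → unitInterval → Z)
    (hmem : ∀ z ∈ Z₁, ∀ w ∈ Z₁, ∀ t, lam z w t ∈ Z₁)
    (hlamc : Continuous fun p : ↥Z₁ × ↥Z₁ × unitInterval => lam p.1 p.2.1 p.2.2)
    (hl0 : ∀ z ∈ Z₁, ∀ w ∈ Z₁, lam z w 0 = z)
    (hl1 : ∀ z ∈ Z₁, ∀ w ∈ Z₁, lam z w 1 = w)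
    (hld : ∀ z ∈ Z₁, ∀ t, lam z z t = z)
    (g : X → Z) (G F : ℕ → Set (X × X)) (φ : ℕ → X × X → unitInterval)
    (gs : ℕ → X → Z)
    (hG0 : G 0 = Set.univ) (hF0 : F 0 = Set.univ)
    (hGopen : ∀ n, IsOpen (G n)) (hFclosed : ∀ n, IsClosed (F n))
    (hdiag : ∀ n, Set.diagonal X ⊆ G (n + 1))
    (hGF : ∀ n, G (n + 1) ⊆ F n) (hFG : ∀ n, F n ⊆ G n)
    (hφ0 : ∀ n ≥ 1, ∀ p ∉ G n, φ n p = 0)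
    (hφ1 : ∀ n ≥ 1, ∀ p ∈ F n, φ n p = 1)
    (hφsep : ∀ n ≥ 1, (∀ x, Continuous fun y => φ n (x, y)) ∧
      ∀ y, Continuous fun x => φ n (x, y))
    (hgsmem : ∀ n ≥ 1, ∀ x, gs n x ∈ Z₁)
    (hgscont : ∀ n ≥ 1, Continuous (gs n))
    (hlim : ∀ (x : X) (xs : ℕ → X), (∀ n ≥ 1, (xs n, x) ∈ F (n - 1)) →
      ∀ t : ℕ → unitInterval,
        Tendsto (fun n => lam (gs n (xs n)) (gs (n + 1) (xs n)) (t n)) atTop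
          (nhds (g x))) :
    ∃ f : X × X → Z,
      (∀ n ≥ 1, ∀ p ∈ F (n - 1) \ F n,
        f p = lam (gs n p.1) (gs (n + 1) p.1) (φ n p)) ∧
      (∀ p ∈ ⋂ n, G n, f p = g p.1) ∧
      (∀ x, Continuous fun y => f (x, y)) ∧
      (∀ y, Continuous fun x => f (x, y)) ∧
      (∀ x, f (x, x) = g x) :=
  stmt_18_general Z₁ lam hmem hlamc hl0 hl1 g G F φ gs hF0 hGopen hFclosed hdiag hGF hFG hφ0 hφ1
    hφsep hgsmem hgscont hlim
end
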